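/- arXiv:1304.4147 — 4 statements merged into one kernel-verified Lean document; each statement's English description precedes it below -/
import Mathlib

section
/- Let X be a complete CAT(0) space and C ⊆ X a closed, connected subset that is locally convex, i.e., for every p ∈ C there exists ε(p) > 0 such that the intersection of the open ball B(p, ε(p)) with C is convex. Then C is convex: for all x, y ∈ C, the geodesic segment from x to y is contained in C. -/
open Metric Set
open scoped ENNReal

noncomputable section

/-- The diameter bound `D_κ` of the model space `M_κ`: `π/√κ` for `κ > 0`, `∞` otherwise. -/
noncomputable def Dkappa (κ : ℝ) : ℝ≥0∞ :=
  if 0 < κ then ENNReal.ofReal (Real.pi / Real.sqrt κ) else ⊤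

/-- `γ` is a (unit-speed) geodesic segment from `x` to `y`, parametrized on `[0, dist x y]`. -/
def IsGeodesicSegment {X : Type*} [MetricSpace X] (γ : ℝ → X) (x y : X) : Prop :=
  γ 0 = x ∧ γ (dist x y) = y ∧
    ∀ s ∈ Icc (0 : ℝ) (dist x y), ∀ t ∈ Icc (0 : ℝ) (dist x y), dist (γ s) (γ t) = |s - t|

/-- The image of a geodesic segment from `x` to `y`. -/
def geodImg {X : Type*} [MetricSpace X] (γ : ℝ → X) (x y : X) : Set X :=
  γ '' Icc 0 (dist x y)

/-- Inverse hyperbolic cosine. -/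
noncomputable def arcosh (x : ℝ) : ℝ := Real.log (x + Real.sqrt (x ^ 2 - 1))

/-- Distance in the model surface `M_κ` between two points at distances `s`, `t` from a
basepoint, with angle `θ` between the corresponding geodesics (law of cosines in `M_κ`). -/
noncomputable def modelDistFromAngle (κ s t θ : ℝ) : ℝ :=
  if 0 < κ then
    (1 / Real.sqrt κ) *
      Real.arccos (Real.cos (Real.sqrt κ * s) * Real.cos (Real.sqrt κ * t) +
        Real.sin (Real.sqrt κ * s) * Real.sin (Real.sqrt κ * t) * Real.cos θ)
  else if κ = 0 then
    Real.sqrt (s ^ 2 + t ^ 2 - 2 * s * t * Real.cos θ)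
  else
    (1 / Real.sqrt (-κ)) *
      arcosh (Real.cosh (Real.sqrt (-κ) * s) * Real.cosh (Real.sqrt (-κ) * t) -
        Real.sinh (Real.sqrt (-κ) * s) * Real.sinh (Real.sqrt (-κ) * t) * Real.cos θ)

/-- The comparison angle at the apex of a triangle in `M_κ` with adjacent sides `a`, `b`
and opposite side `c` (obtained from the law of cosines in `M_κ`). -/
noncomputable def compAngle (κ a b c : ℝ) : ℝ :=
  if 0 < κ then
    Real.arccos ((Real.cos (Real.sqrt κ * c) -
        Real.cos (Real.sqrt κ * a) * Real.cos (Real.sqrt κ * b)) /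
      (Real.sin (Real.sqrt κ * a) * Real.sin (Real.sqrt κ * b)))
  else if κ = 0 then
    Real.arccos ((a ^ 2 + b ^ 2 - c ^ 2) / (2 * a * b))
  else
    Real.arccos ((Real.cosh (Real.sqrt (-κ) * a) * Real.cosh (Real.sqrt (-κ) * b) -
        Real.cosh (Real.sqrt (-κ) * c)) /
      (Real.sinh (Real.sqrt (-κ) * a) * Real.sinh (Real.sqrt (-κ) * b)))

/-- A complete CAT(κ) space: a complete metric space in which points at distance `< D_κ`
are joined by a (unique) geodesic, and geodesic triangles of perimeter `< 2 D_κ` satisfy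
the comparison inequality with respect to the model surface `M_κ`. -/
class CATSpace (κ : ℝ) (X : Type*) [MetricSpace X] : Prop where
  complete : CompleteSpace X
  exists_geodesic : ∀ x y : X, edist x y < Dkappa κ → ∃ γ : ℝ → X, IsGeodesicSegment γ x y
  unique_geodesic : ∀ x y : X, edist x y < Dkappa κ →
    ∀ γ₁ γ₂ : ℝ → X, IsGeodesicSegment γ₁ x y → IsGeodesicSegment γ₂ x y →
      EqOn γ₁ γ₂ (Icc 0 (dist x y))
  comparison : ∀ x y z : X,
    edist x y + edist x z + edist y z < 2 * Dkappa κ →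
    ∀ γ₁ γ₂ : ℝ → X, IsGeodesicSegment γ₁ x y → IsGeodesicSegment γ₂ x z →
      ∀ s ∈ Icc (0 : ℝ) (dist x y), ∀ t ∈ Icc (0 : ℝ) (dist x z),
        dist (γ₁ s) (γ₂ t) ≤
          modelDistFromAngle κ s t (compAngle κ (dist x y) (dist x z) (dist y z))

/-- A subset of a CAT(κ) space is convex if it contains every geodesic segment
between any two of its points at distance `< D_κ`. -/
def IsConvexSubset (κ : ℝ) {X : Type*} [MetricSpace X] (S : Set X) : Prop :=
  ∀ x ∈ S, ∀ y ∈ S, edist x y < Dkappa κ →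
    ∀ γ : ℝ → X, IsGeodesicSegment γ x y → geodImg γ x y ⊆ S

/-- `C` is locally convex: every point of `C` has an open ball whose intersection
with `C` is convex. -/
def IsLocallyConvexSubset (κ : ℝ) {X : Type*} [MetricSpace X] (C : Set X) : Prop :=
  ∀ p ∈ C, ∃ ε > (0 : ℝ), IsConvexSubset κ (ball p ε ∩ C)

/-- The induced length (intrinsic) metric on a subset `C`: the infimum of lengths of
curves in `C` joining `x` and `y` (`∞` if there is no such rectifiable curve). -/
noncomputable def lengthMetric {X : Type*} [MetricSpace X] (C : Set X) (x y : X) : ℝ≥0∞ :=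
  ⨅ (γ : ℝ → X) (_ : ContinuousOn γ (Icc 0 1)) (_ : γ 0 = x) (_ : γ 1 = y)
    (_ : MapsTo γ (Icc 0 1) C), eVariationOn γ (Icc 0 1)

end


section Helpers

open Metric Set
open scoped ENNReal

set_option linter.unusedSectionVars false

variable {X : Type*} [MetricSpace X] [CATSpace 0 X]

lemma Dkappa_zero : Dkappa 0 = ⊤ := by simp [Dkappa]

lemma edist_lt_D (x y : X) : edist x y < Dkappa 0 := by
  rw [Dkappa_zero]; exact edist_lt_top x y

/-- Canonical geodesic between two points. -/
noncomputable def geod (x y : X) : ℝ → X :=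
  Classical.choose (CATSpace.exists_geodesic x y (edist_lt_D x y))

lemma geod_spec (x y : X) : IsGeodesicSegment (geod x y) x y :=
  Classical.choose_spec (CATSpace.exists_geodesic x y (edist_lt_D x y))

lemma geod_unique {x y : X} {γ : ℝ → X} (h : IsGeodesicSegment γ x y) :
    EqOn γ (geod x y) (Icc 0 (dist x y)) :=
  CATSpace.unique_geodesic x y (edist_lt_D x y) γ (geod x y) h (geod_spec x y)

namespace IsGeodesicSegment

variable {γ : ℝ → X} {x y : X}

lemma start (h : IsGeodesicSegment γ x y) : γ 0 = x := h.1

lemma finish (h : IsGeodesicSegment γ x y) : γ (dist x y) = y := h.2.1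

lemma dist_eq (h : IsGeodesicSegment γ x y) {s t : ℝ}
    (hs : s ∈ Icc (0:ℝ) (dist x y)) (ht : t ∈ Icc (0:ℝ) (dist x y)) :
    dist (γ s) (γ t) = |s - t| := h.2.2 s hs t ht

lemma reverse (h : IsGeodesicSegment γ x y) :
    IsGeodesicSegment (fun t => γ (dist x y - t)) y x := by
  have hd : dist y x = dist x y := dist_comm y x
  refine ⟨by simpa using h.finish, ?_, ?_⟩
  · simp only [hd]
    simpa using h.start
  · intro s hs t ht
    rw [hd] at hs ht
    have := h.dist_eq (s := dist x y - s) (t := dist x y - t)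
      ⟨by linarith [hs.2], by linarith [hs.1]⟩ ⟨by linarith [ht.2], by linarith [ht.1]⟩
    rw [this]
    rw [abs_sub_comm]
    ring_nf

end IsGeodesicSegment

/-- Key comparison inequality for CAT(0), squared form. -/
lemma comp_bound {x y z : X} {γ₁ γ₂ : ℝ → X}
    (h₁ : IsGeodesicSegment γ₁ x y) (h₂ : IsGeodesicSegment γ₂ x z)
    (ha : 0 < dist x y) (hb : 0 < dist x z)
    {s t : ℝ} (hs : s ∈ Icc (0:ℝ) (dist x y)) (ht : t ∈ Icc (0:ℝ) (dist x z)) :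
    dist (γ₁ s) (γ₂ t) ^ 2 ≤
      s ^ 2 + t ^ 2 - 2 * s * t *
        ((dist x y ^ 2 + dist x z ^ 2 - dist y z ^ 2) / (2 * dist x y * dist x z)) := by
  set a := dist x y
  set b := dist x z
  set c := dist y z
  have hper : edist x y + edist x z + edist y z < 2 * Dkappa 0 := by
    rw [Dkappa_zero]
    have h2 : (2 : ℝ≥0∞) * ⊤ = ⊤ := by simp
    rw [h2]
    exact ENNReal.add_lt_top.2 ⟨ENNReal.add_lt_top.2 ⟨edist_lt_top _ _, edist_lt_top _ _⟩,
      edist_lt_top _ _⟩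
  have hcomp := CATSpace.comparison x y z hper γ₁ γ₂ h₁ h₂ s hs t ht
  set u := (a ^ 2 + b ^ 2 - c ^ 2) / (2 * a * b) with hu
  have hu1 : |u| ≤ 1 := by
    have h1 : c ≤ a + b := by
      have := dist_triangle y x z
      simpa [a, b, c, dist_comm] using this
    have h2 : a ≤ b + c := by
      have := dist_triangle x z y
      simpa [a, b, c, dist_comm] using this
    have h3 : b ≤ a + c := by
      have := dist_triangle x y z
      simpa [a, b, c, dist_comm] using this
    have hc : 0 ≤ c := dist_nonneg
    rw [abs_le]
    constructor
    · rw [le_div_iff₀ (by positivity)]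
      nlinarith
    · rw [div_le_one (by positivity)]
      nlinarith
  have hang : compAngle 0 a b c = Real.arccos u := by
    simp [compAngle, hu]
  have hmodel : modelDistFromAngle 0 s t (compAngle 0 a b c)
      = Real.sqrt (s ^ 2 + t ^ 2 - 2 * s * t * u) := by
    rw [hang]
    simp only [modelDistFromAngle, lt_irrefl, if_false, if_pos rfl, if_neg (lt_irrefl (0:ℝ))]
    rw [Real.cos_arccos (by linarith [abs_le.1 hu1]) (by linarith [abs_le.1 hu1])]
    simp
  rw [hmodel] at hcomp
  have hE : 0 ≤ s ^ 2 + t ^ 2 - 2 * s * t * u := by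
    have hst : 0 ≤ s * t := mul_nonneg hs.1 ht.1
    nlinarith [abs_le.1 hu1, sq_nonneg (s - t), sq_nonneg (s + t)]
  calc dist (γ₁ s) (γ₂ t) ^ 2 ≤ Real.sqrt (s ^ 2 + t ^ 2 - 2 * s * t * u) ^ 2 := by
        apply pow_le_pow_left₀ dist_nonneg hcomp
      _ = s ^ 2 + t ^ 2 - 2 * s * t * u := Real.sq_sqrt hE

/-- Convexity of the distance between two geodesics issuing from a common point. -/
lemma geod_convex {x y z : X} {γ₁ γ₂ : ℝ → X}
    (h₁ : IsGeodesicSegment γ₁ x y) (h₂ : IsGeodesicSegment γ₂ x z)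
    {l : ℝ} (hl0 : 0 ≤ l) (hl1 : l ≤ 1) :
    dist (γ₁ (l * dist x y)) (γ₂ (l * dist x z)) ≤ l * dist y z := by
  set a := dist x y with hadef
  set b := dist x z with hbdef
  set c := dist y z with hcdef
  have ha0 : 0 ≤ a := dist_nonneg
  have hb0 : 0 ≤ b := dist_nonneg
  have hc0 : 0 ≤ c := dist_nonneg
  rcases eq_or_lt_of_le ha0 with ha | ha
  · -- a = 0 : x = y
    have hxy : x = y := by
      have : dist x y ≤ 0 := by rw [hadef] at ha; linarith
      exact eq_of_dist_eq_zero (le_antisymm this dist_nonneg)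
    have h1 : γ₁ (l * a) = x := by
      rw [← ha]; simpa using h₁.start
    rw [h1]
    have h2 : dist (γ₂ 0) (γ₂ (l * b)) = |0 - l * b| := by
      apply h₂.dist_eq ⟨le_refl _, hb0⟩
      constructor
      · positivity
      · calc l * b ≤ 1 * b := by apply mul_le_mul_of_nonneg_right hl1 hb0
          _ = b := one_mul b
    have hx : γ₂ 0 = x := h₂.start
    rw [← hx]
    rw [h2]
    have : |0 - l * b| = l * b := by
      rw [abs_sub_comm]; simp [abs_of_nonneg (by positivity : (0:ℝ) ≤ l * b)]
    rw [this]
    have : c = b := by rw [hcdef, hbdef, hxy]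
    rw [this]
  rcases eq_or_lt_of_le hb0 with hb | hb
  · -- b = 0 : x = z
    have hxz : x = z := by
      have : dist x z ≤ 0 := by rw [hbdef] at hb; linarith
      exact eq_of_dist_eq_zero (le_antisymm this dist_nonneg)
    have h2 : γ₂ (l * b) = x := by
      rw [← hb]; simpa using h₂.start
    rw [h2]
    have h1 : dist (γ₁ 0) (γ₁ (l * a)) = |0 - l * a| := by
      apply h₁.dist_eq ⟨le_refl _, ha0⟩
      exact ⟨by positivity, by calc l * a ≤ 1 * a := mul_le_mul_of_nonneg_right hl1 ha0
        _ = a := one_mul a⟩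
    have hx : γ₁ 0 = x := h₁.start
    rw [dist_comm, ← hx, h1]
    have h3 : |0 - l * a| = l * a := by
      rw [abs_sub_comm]; simp [abs_of_nonneg (by positivity : (0:ℝ) ≤ l * a)]
    rw [h3]
    have : c = a := by rw [hcdef, hadef, hxz]; exact dist_comm y z
    rw [this]
  · -- main case
    have hs : l * a ∈ Icc (0:ℝ) a :=
      ⟨by positivity, by calc l * a ≤ 1 * a := mul_le_mul_of_nonneg_right hl1 ha0
        _ = a := one_mul a⟩
    have ht : l * b ∈ Icc (0:ℝ) b :=
      ⟨by positivity, by calc l * b ≤ 1 * b := mul_le_mul_of_nonneg_right hl1 hb0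
        _ = b := one_mul b⟩
    have key := comp_bound h₁ h₂ ha hb hs ht
    have hsq : dist (γ₁ (l * a)) (γ₂ (l * b)) ^ 2 ≤ (l * c) ^ 2 := by
      refine key.trans (le_of_eq ?_)
      rw [← hadef, ← hbdef, ← hcdef]
      field_simp
      ring
    have h1 : dist (γ₁ (l * a)) (γ₂ (l * b)) ≤ l * c := by
      nlinarith [dist_nonneg (x := γ₁ (l * a)) (y := γ₂ (l * b)),
        mul_nonneg hl0 hc0]
    exact h1

/-- A point on a geodesic is at distance at most the max of the distances to endpoints. -/
lemma dist_to_geod {a b : X} {γ : ℝ → X} (h : IsGeodesicSegment γ a b)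
    {s : ℝ} (hs : s ∈ Icc (0:ℝ) (dist a b)) (p : X) :
    dist (γ s) p ≤ max (dist a p) (dist b p) := by
  set c := dist a b with hcdef
  have hc0 : 0 ≤ c := dist_nonneg
  set al := dist a p with hal
  have hal0 : 0 ≤ al := dist_nonneg
  rcases eq_or_lt_of_le hc0 with hc | hc
  · -- c = 0 : s = 0
    have hs0 : s = 0 := le_antisymm (hs.2.trans hc.symm.le) hs.1
    rw [hs0, h.start]
    exact le_max_left _ _
  rcases eq_or_lt_of_le hal0 with hA | hA
  · -- p = a
    have hpa : a = p := by
      have : dist a p ≤ 0 := by rw [hal] at hA; linarith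
      exact eq_of_dist_eq_zero (le_antisymm this dist_nonneg)
    have h1 : dist (γ s) (γ 0) = |s - 0| := h.dist_eq hs ⟨le_refl _, hc0⟩
    have h2 : dist (γ s) p = s := by
      rw [← hpa, ← h.start, h1]
      simp [abs_of_nonneg hs.1]
    rw [h2]
    refine le_trans hs.2 (le_trans ?_ (le_max_right _ _))
    rw [← hpa, hcdef, dist_comm]
  · -- main case
    have hgp : IsGeodesicSegment (geod a p) a p := geod_spec a p
    have key := comp_bound h hgp hc hA hs ⟨dist_nonneg, le_refl _⟩
    rw [hgp.finish] at key
    set be := dist b p with hbe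
    have hbe0 : 0 ≤ be := dist_nonneg
    -- key : dist (γ s) p ^2 ≤ s^2 + al^2 - 2 s al * ((c^2+al^2-be^2)/(2 c al))
    have hq : s ^ 2 + al ^ 2 - 2 * s * al * ((c ^ 2 + al ^ 2 - be ^ 2) / (2 * c * al))
        ≤ (1 - s / c) * al ^ 2 + (s / c) * be ^ 2 := by
      have hcne : c ≠ 0 := ne_of_gt hc
      have halne : al ≠ 0 := ne_of_gt hA
      have hrw : 2 * s * al * ((c ^ 2 + al ^ 2 - be ^ 2) / (2 * c * al))
          = s * (c ^ 2 + al ^ 2 - be ^ 2) / c := by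
        field_simp
      rw [hrw]
      have key2 : ((1 - s / c) * al ^ 2 + (s / c) * be ^ 2)
          - (s ^ 2 + al ^ 2 - s * (c ^ 2 + al ^ 2 - be ^ 2) / c) = s * (c - s) := by
        field_simp; ring
      have hnn : 0 ≤ s * (c - s) :=
        mul_nonneg hs.1 (sub_nonneg.2 hs.2)
      linarith
    have hmax : (1 - s / c) * al ^ 2 + (s / c) * be ^ 2 ≤ max al be ^ 2 := by
      have h1 : al ^ 2 ≤ max al be ^ 2 := by
        apply pow_le_pow_left₀ hal0 (le_max_left _ _)
      have h2 : be ^ 2 ≤ max al be ^ 2 := by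
        apply pow_le_pow_left₀ hbe0 (le_max_right _ _)
      have hl0 : 0 ≤ s / c := div_nonneg hs.1 hc0
      have hl1 : s / c ≤ 1 := by rw [div_le_one hc]; exact hs.2
      nlinarith
    have : dist (γ s) p ^ 2 ≤ max al be ^ 2 := le_trans key (hq.trans hmax)
    have hmx : 0 ≤ max al be := le_max_of_le_left hal0
    nlinarith [dist_nonneg (x := γ s) (y := p)]

/-- Midpoint via the canonical geodesic. -/
noncomputable def midp (a b : X) : X := geod a b (dist a b / 2)

lemma midp_mem_geodImg {a b : X} {γ : ℝ → X} (h : IsGeodesicSegment γ a b) :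
    midp a b ∈ geodImg γ a b := by
  have hmem : dist a b / 2 ∈ Icc (0:ℝ) (dist a b) :=
    ⟨by positivity, by linarith [dist_nonneg (x := a) (y := b)]⟩
  have := geod_unique h hmem
  exact ⟨dist a b / 2, hmem, this.symm ▸ rfl⟩

lemma geod_restrict {x y : X} {γ : ℝ → X} (h : IsGeodesicSegment γ x y)
    {u v : ℝ} (hu : u ∈ Icc (0:ℝ) (dist x y)) (hv : v ∈ Icc (0:ℝ) (dist x y))
    (huv : u ≤ v) : IsGeodesicSegment (fun s => γ (u + s)) (γ u) (γ v) := by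
  have hd : dist (γ u) (γ v) = v - u := by
    rw [h.dist_eq hu hv, abs_sub_comm, abs_of_nonneg (by linarith)]
  refine ⟨by simp, by rw [hd]; congr 1; ring, ?_⟩
  intro s hs t ht
  rw [hd] at hs ht
  have := h.dist_eq (s := u + s) (t := u + t)
    ⟨by linarith [hs.1, hu.1], by linarith [hs.2, hv.2]⟩
    ⟨by linarith [ht.1, hu.1], by linarith [ht.2, hv.2]⟩
  rw [this]
  congr 1
  ring

/-- Midpoint of two points on a geodesic. -/
lemma midp_on_geod {x y : X} {γ : ℝ → X} (h : IsGeodesicSegment γ x y)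
    {u v : ℝ} (hu : u ∈ Icc (0:ℝ) (dist x y)) (hv : v ∈ Icc (0:ℝ) (dist x y))
    (huv : u ≤ v) : midp (γ u) (γ v) = γ ((u + v) / 2) := by
  have hres := geod_restrict h hu hv huv
  have hd : dist (γ u) (γ v) = v - u := by
    rw [h.dist_eq hu hv, abs_sub_comm, abs_of_nonneg (by linarith)]
  have hmem : dist (γ u) (γ v) / 2 ∈ Icc (0:ℝ) (dist (γ u) (γ v)) :=
    ⟨by positivity, by linarith [dist_nonneg (x := γ u) (y := γ v)]⟩
  have := geod_unique hres hmem
  have h2 : midp (γ u) (γ v) = γ (u + dist (γ u) (γ v) / 2) := this.symm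
  rw [h2, hd]
  congr 1
  ring

lemma midp_comm (a b : X) : midp a b = midp b a := by
  have h := (geod_spec a b).reverse
  have hd : dist b a = dist a b := dist_comm b a
  have hmem : dist b a / 2 ∈ Icc (0:ℝ) (dist b a) :=
    ⟨by positivity, by linarith [dist_nonneg (x := b) (y := a)]⟩
  have := geod_unique h hmem
  have h2 : midp b a = geod a b (dist a b - dist b a / 2) := this.symm
  rw [h2, hd]
  have : dist a b - dist a b / 2 = dist a b / 2 := by ring
  rw [this, midp]

lemma dist_midp_left (a b : X) : dist a (midp a b) = dist a b / 2 := by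
  have h := geod_spec a b
  have h0 : (0:ℝ) ∈ Icc (0:ℝ) (dist a b) := ⟨le_refl _, dist_nonneg⟩
  have hmem : dist a b / 2 ∈ Icc (0:ℝ) (dist a b) :=
    ⟨by positivity, by linarith [dist_nonneg (x := a) (y := b)]⟩
  have heq := h.dist_eq h0 hmem
  rw [abs_sub_comm, sub_zero, abs_of_nonneg (by positivity), h.start] at heq
  simpa [midp] using heq

/-- Midpoints are a contraction. -/
lemma midp_contract (a b a' b' : X) :
    dist (midp a b) (midp a' b') ≤ dist a a' / 2 + dist b b' / 2 := by
  have step1 : dist (midp a b) (midp a b') ≤ dist b b' / 2 := by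
    have h₁ := geod_spec a b
    have h₂ := geod_spec a b'
    have := geod_convex h₁ h₂ (l := 1/2) (by norm_num) (by norm_num)
    have e1 : (1:ℝ)/2 * dist a b = dist a b / 2 := by ring
    have e2 : (1:ℝ)/2 * dist a b' = dist a b' / 2 := by ring
    rw [e1, e2] at this
    have e3 : (1:ℝ)/2 * dist b b' = dist b b' / 2 := by ring
    rw [e3] at this
    exact this
  have step2 : dist (midp a b') (midp a' b') ≤ dist a a' / 2 := by
    rw [midp_comm a b', midp_comm a' b']
    have h₁ := geod_spec b' a
    have h₂ := geod_spec b' a'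
    have := geod_convex h₁ h₂ (l := 1/2) (by norm_num) (by norm_num)
    have e1 : (1:ℝ)/2 * dist b' a = dist b' a / 2 := by ring
    have e2 : (1:ℝ)/2 * dist b' a' = dist b' a' / 2 := by ring
    rw [e1, e2] at this
    have e3 : (1:ℝ)/2 * dist a a' = dist a a' / 2 := by ring
    rw [e3] at this
    exact this
  calc dist (midp a b) (midp a' b') ≤
      dist (midp a b) (midp a b') + dist (midp a b') (midp a' b') := dist_triangle _ _ _
    _ ≤ dist b b' / 2 + dist a a' / 2 := add_le_add step1 step2
    _ = dist a a' / 2 + dist b b' / 2 := by ring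

/-- `B(z,ε) ∩ C` is a convex set. -/
def GoodBall (C : Set X) (z : X) (ε : ℝ) : Prop := IsConvexSubset 0 (ball z ε ∩ C)

lemma good_transfer {C : Set X} {p q : X} {ε δ : ℝ} (h : GoodBall C p ε)
    (hq : dist p q + δ ≤ ε) : GoodBall C q δ := by
  intro a ha b hb _ γ hγ
  have hsub : ball q δ ∩ C ⊆ ball p ε ∩ C := by
    rintro w ⟨hw1, hw2⟩
    refine ⟨?_, hw2⟩
    rw [mem_ball] at hw1 ⊢
    calc dist w p ≤ dist w q + dist q p := dist_triangle _ _ _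
      _ < δ + dist q p := by linarith
      _ ≤ ε := by rw [dist_comm]; linarith
  have himg := h a (hsub ha) b (hsub hb) (edist_lt_D a b) γ hγ
  rintro w ⟨s, hsmem, rfl⟩
  refine ⟨?_, (himg ⟨s, hsmem, rfl⟩).2⟩
  rw [mem_ball]
  calc dist (γ s) q ≤ max (dist a q) (dist b q) := dist_to_geod hγ hsmem q
    _ < δ := by
        apply max_lt
        · rw [dist_comm] at *; exact mem_ball'.mp ha.1
        · rw [dist_comm] at *; exact mem_ball'.mp hb.1

/-- Uniform convexity radius near a compact subset of `C`. -/
lemma uniform_eps {C : Set X} (hlc : IsLocallyConvexSubset 0 C)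
    {K : Set X} (hK : IsCompact K) (hKC : K ⊆ C) (hne : K.Nonempty) :
    ∃ ε > (0:ℝ), ∀ z : X, (∃ k ∈ K, dist z k ≤ ε) → GoodBall C z ε := by
  classical
  have hsel : ∀ p, p ∈ K → ∃ ε, 0 < ε ∧ GoodBall C p ε := fun p hp => by
    obtain ⟨ε, hε, hconv⟩ := hlc p (hKC hp)
    exact ⟨ε, hε, hconv⟩
  choose! εsel hpos hGood using hsel
  have hcover : K ⊆ ⋃ p ∈ K, ball p (εsel p / 4) := by
    intro k hk
    exact mem_biUnion hk (mem_ball_self (by have := hpos k hk; linarith))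
  obtain ⟨t, htK, htfin, hsub⟩ :=
    hK.elim_finite_subcover_image (fun p _ => isOpen_ball) hcover
  have htne : t.Nonempty := by
    obtain ⟨k, hk⟩ := hne
    obtain ⟨p, hp, _⟩ := mem_iUnion₂.mp (hsub hk)
    exact ⟨p, hp⟩
  set F := htfin.toFinset with hF
  have hFne : F.Nonempty := by
    rwa [hF, Set.Finite.toFinset_nonempty]
  set ε := F.inf' hFne (fun p => εsel p / 4) with hε
  have hεpos : 0 < ε := by
    rw [hε]
    rw [Finset.lt_inf'_iff]
    intro p hp
    have hpK : p ∈ K := htK (htfin.mem_toFinset.mp hp)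
    have := hpos p hpK
    linarith
  refine ⟨ε, hεpos, ?_⟩
  rintro z ⟨k, hk, hzk⟩
  obtain ⟨p, hp, hkp⟩ := mem_iUnion₂.mp (hsub hk)
  have hpK : p ∈ K := htK hp
  have hεle : ε ≤ εsel p / 4 := by
    rw [hε]
    exact Finset.inf'_le _ (htfin.mem_toFinset.mpr hp)
  apply good_transfer (hGood p hpK)
  have h1 : dist p z ≤ dist p k + dist k z := dist_triangle _ _ _
  have h2 : dist p k < εsel p / 4 := by rw [dist_comm]; exact mem_ball.mp hkp
  have h3 : dist k z ≤ ε := by rw [dist_comm]; exact hzk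
  linarith

/-- Jacobi midpoint iteration on chains. -/
noncomputable def iterChain (m : X → X → X) (n : ℕ) (p0 : ℕ → X) : ℕ → ℕ → X
  | 0 => p0
  | k+1 => fun i => if i = 0 ∨ n ≤ i then p0 i
      else m (iterChain m n p0 k (i-1)) (iterChain m n p0 k (i+1))

lemma iterChain_zero (m : X → X → X) (n : ℕ) (p0 : ℕ → X) : iterChain m n p0 0 = p0 := rfl

lemma iterChain_succ (m : X → X → X) (n : ℕ) (p0 : ℕ → X) (k i : ℕ) :
    iterChain m n p0 (k+1) i = if i = 0 ∨ n ≤ i then p0 i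
      else m (iterChain m n p0 k (i-1)) (iterChain m n p0 k (i+1)) := rfl

lemma sin_min {n : ℕ} (hn : 2 ≤ n) {i : ℕ} (h1 : 1 ≤ i) (h2 : i < n) :
    Real.sin (Real.pi / n) ≤ Real.sin (i * (Real.pi / n)) := by
  have hπ := Real.pi_pos
  have hnR : (2:ℝ) ≤ n := by exact_mod_cast hn
  have hnpos : (0:ℝ) < n := by linarith
  set θ := Real.pi / n with hθ
  have hθpos : 0 < θ := by positivity
  have hiR : (1:ℝ) ≤ i := by exact_mod_cast h1
  have hin : (i:ℝ) ≤ (n:ℝ) - 1 := by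
    have : (i:ℝ) + 1 ≤ n := by exact_mod_cast h2
    linarith
  have hlow : θ ≤ i * θ := le_mul_of_one_le_left hθpos.le hiR
  have hhigh : (i:ℝ) * θ ≤ Real.pi - θ := by
    have : ((n:ℝ) - 1) * θ = Real.pi - θ := by
      field_simp [hθ]
      linarith [show (n:ℝ) * θ = Real.pi by rw [hθ]; exact mul_div_cancel₀ _ hnpos.ne']
    rw [← this]
    exact mul_le_mul_of_nonneg_right hin hθpos.le
  have hθhalf : θ ≤ Real.pi / 2 := by
    rw [hθ, div_le_div_iff₀ hnpos (by norm_num)]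
    nlinarith
  rcases le_or_gt ((i:ℝ) * θ) (Real.pi / 2) with hc | hc
  · exact Real.sin_le_sin_of_le_of_le_pi_div_two (by linarith) hc hlow
  · have : Real.sin ((i:ℝ) * θ) = Real.sin (Real.pi - (i:ℝ) * θ) := (Real.sin_pi_sub _).symm
    rw [this]
    exact Real.sin_le_sin_of_le_of_le_pi_div_two (by linarith) (by linarith) (by linarith)

set_option maxHeartbeats 1000000 in
/-- Openness: whenever the geodesic from `x` to `y` lies in `C`, so do geodesics from `x`
to all points of `C` near `y`. -/
lemma extend {C : Set X} (hclosed : IsClosed C) (hlc : IsLocallyConvexSubset 0 C)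
    {x y : X} (hx : x ∈ C) (hy : y ∈ C)
    (hK : ∀ t ∈ Icc (0:ℝ) (dist x y), geod x y t ∈ C) :
    ∃ δ > (0:ℝ), ∀ y' ∈ C, dist y y' < δ →
      ∀ t ∈ Icc (0:ℝ) (dist x y'), geod x y' t ∈ C := by
  classical
  have hπ := Real.pi_pos
  set γ := geod x y with hγdef
  set L := dist x y with hL
  have hγ : IsGeodesicSegment γ x y := geod_spec x y
  have hL0 : 0 ≤ L := dist_nonneg
  set K := γ '' Icc 0 L with hKdef
  have hKC : K ⊆ C := by rintro w ⟨s, hs, rfl⟩; exact hK s hs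
  have hγcont : ContinuousOn γ (Icc 0 L) := by
    apply LipschitzOnWith.continuousOn (K := 1)
    apply LipschitzOnWith.of_dist_le_mul
    intro s hs t ht
    rw [hγ.dist_eq hs ht, Real.dist_eq]
    simp
  have hKcomp : IsCompact K := isCompact_Icc.image_of_continuousOn hγcont
  have hKne : K.Nonempty := ⟨x, 0, ⟨le_refl _, hL0⟩, hγ.start⟩
  obtain ⟨ε, hεpos, hGood⟩ := uniform_eps hlc hKcomp hKC hKne
  refine ⟨ε/8, by linarith, ?_⟩
  intro y' hy' hyy'
  set γ' := geod x y' with hγ'def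
  set L' := dist x y' with hL'
  have hγ' : IsGeodesicSegment γ' x y' := geod_spec x y'
  have hL'0 : 0 ≤ L' := dist_nonneg
  -- convexity comparison between γ and γ'
  have hcmp : ∀ l : ℝ, 0 ≤ l → l ≤ 1 → dist (γ (l * L)) (γ' (l * L')) ≤ l * dist y y' :=
    fun l h0 h1 => geod_convex hγ hγ' h0 h1
  -- MAIN GRID CLAIM
  have grid : ∀ n : ℕ, 2 ≤ n → L' ≤ n * (ε/4) → ∀ i : ℕ, i ≤ n →
      γ' ((i:ℝ) * (L'/n)) ∈ C := by
    intro n hn2 hmesh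
    have hnR : (2:ℝ) ≤ n := by exact_mod_cast hn2
    have hnpos : (0:ℝ) < n := by linarith
    have hn0 : (n:ℝ) ≠ 0 := ne_of_gt hnpos
    set h' := L'/n with hh'
    have hh'0 : 0 ≤ h' := by positivity
    have hh'mesh : h' ≤ ε/4 := by
      rw [hh', div_le_iff₀ hnpos]
      linarith [hmesh]
    set q : ℕ → X := fun i => γ' ((i:ℝ) * h') with hq
    have hargmem : ∀ i : ℕ, i ≤ n → (i:ℝ) * h' ∈ Icc (0:ℝ) L' := by
      intro i hi
      have hiR : (i:ℝ) ≤ n := by exact_mod_cast hi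
      constructor
      · positivity
      · calc (i:ℝ) * h' ≤ (n:ℝ) * h' := mul_le_mul_of_nonneg_right hiR hh'0
          _ = L' := by rw [hh']; field_simp
    have hq0 : q 0 = x := by
      simp only [hq, Nat.cast_zero, zero_mul]
      exact hγ'.start
    have hqn : q n = y' := by
      simp only [hq]
      have : (n:ℝ) * h' = L' := by rw [hh']; field_simp
      rw [this]
      exact hγ'.finish
    have hqdist : ∀ i j : ℕ, i ≤ n → j ≤ n →
        dist (q i) (q j) = |(i:ℝ) - j| * h' := by
      intro i j hi hj
      simp only [hq]
      rw [hγ'.dist_eq (hargmem i hi) (hargmem j hj)]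
      rw [← sub_mul, abs_mul, abs_of_nonneg hh'0]
    -- each q i is close to K
    have hqK : ∀ i : ℕ, i ≤ n → ∃ k ∈ K, dist (q i) k ≤ ε/8 := by
      intro i hi
      have hiR : (i:ℝ) ≤ n := by exact_mod_cast hi
      have hl0 : (0:ℝ) ≤ (i:ℝ)/n := by positivity
      have hl1 : (i:ℝ)/n ≤ 1 := by rw [div_le_one hnpos]; exact hiR
      refine ⟨γ (((i:ℝ)/n) * L), ⟨((i:ℝ)/n) * L, ⟨by positivity, ?_⟩, rfl⟩, ?_⟩
      · calc ((i:ℝ)/n) * L ≤ 1 * L := mul_le_mul_of_nonneg_right hl1 hL0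
          _ = L := one_mul L
      · have := hcmp ((i:ℝ)/n) hl0 hl1
        have harg : ((i:ℝ)/n) * L' = (i:ℝ) * h' := by rw [hh']; ring
        rw [harg] at this
        rw [dist_comm]
        calc dist (γ (((i:ℝ)/n) * L)) (q i) ≤ ((i:ℝ)/n) * dist y y' := this
          _ ≤ 1 * dist y y' := mul_le_mul_of_nonneg_right hl1 dist_nonneg
          _ ≤ ε/8 := by rw [one_mul]; linarith
    -- q is a midpoint chain
    have hqmid : ∀ i : ℕ, 1 ≤ i → i < n → midp (q (i-1)) (q (i+1)) = q i := by
      intro i h1 h2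
      have hi1 : i - 1 ≤ n := by omega
      have hi2 : i + 1 ≤ n := by omega
      have hcast : ((i - 1 : ℕ) : ℝ) = (i:ℝ) - 1 := by
        have : (1:ℕ) ≤ i := h1
        push_cast [this]
        ring
      have hle : ((i-1:ℕ):ℝ) * h' ≤ ((i+1:ℕ):ℝ) * h' := by
        apply mul_le_mul_of_nonneg_right _ hh'0
        push_cast [h1]
        linarith
      have := midp_on_geod hγ' (hargmem (i-1) hi1) (hargmem (i+1) hi2) hle
      simp only [hq]
      rw [this]
      congr 1
      rw [hcast]
      push_cast
      ring
    -- initial chain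
    set p0 : ℕ → X := fun i => if n ≤ i then y' else γ ((i:ℝ) * (L/n)) with hp0
    set p := iterChain midp n p0 with hp
    have hp0mem : ∀ i : ℕ, i ≤ n → p0 i ∈ C := by
      intro i hi
      simp only [hp0]
      split_ifs with hcase
      · exact hy'
      · apply hK
        have hiR : (i:ℝ) ≤ n := by exact_mod_cast hi
        constructor
        · positivity
        · calc (i:ℝ) * (L/n) ≤ (n:ℝ) * (L/n) :=
              mul_le_mul_of_nonneg_right hiR (by positivity)
            _ = L := by field_simp
    have hp0dist : ∀ i : ℕ, i ≤ n → dist (p0 i) (q i) ≤ dist y y' := by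
      intro i hi
      simp only [hp0]
      split_ifs with hcase
      · have : i = n := le_antisymm hi hcase
        rw [this, hqn]
        simp only [dist_self]
        exact dist_nonneg
      · have hiR : (i:ℝ) ≤ n := by exact_mod_cast hi
        have hl0 : (0:ℝ) ≤ (i:ℝ)/n := by positivity
        have hl1 : (i:ℝ)/n ≤ 1 := by rw [div_le_one hnpos]; exact hiR
        have := hcmp ((i:ℝ)/n) hl0 hl1
        have harg1 : ((i:ℝ)/n) * L = (i:ℝ) * (L/n) := by ring
        have harg2 : ((i:ℝ)/n) * L' = (i:ℝ) * h' := by rw [hh']; ring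
        rw [harg1, harg2] at this
        calc dist (γ ((i:ℝ) * (L/n))) (q i) ≤ ((i:ℝ)/n) * dist y y' := this
          _ ≤ 1 * dist y y' := mul_le_mul_of_nonneg_right hl1 dist_nonneg
          _ = dist y y' := one_mul _
    -- trigonometry
    set θ := Real.pi / n with hθ
    have hθpos : 0 < θ := by positivity
    have hθhalf : θ ≤ Real.pi / 2 := by
      rw [hθ, div_le_div_iff₀ hnpos (by norm_num)]
      nlinarith
    set r := Real.cos θ with hr
    have hr0 : 0 ≤ r := Real.cos_nonneg_of_mem_Icc ⟨by linarith, hθhalf⟩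
    have hr1 : r < 1 := by
      rw [hr]
      have := Real.strictAntiOn_cos (a := 0) (b := θ)
        ⟨le_refl 0, by linarith⟩ ⟨hθpos.le, by linarith⟩ hθpos
      simpa using this
    have hsinθ : 0 < Real.sin θ := Real.sin_pos_of_pos_of_lt_pi hθpos (by linarith)
    have hwnn : ∀ i : ℕ, i ≤ n → 0 ≤ Real.sin ((i:ℝ) * θ) := by
      intro i hi
      apply Real.sin_nonneg_of_nonneg_of_le_pi
      · positivity
      · have hiR : (i:ℝ) ≤ n := by exact_mod_cast hi
        calc (i:ℝ) * θ ≤ (n:ℝ) * θ := mul_le_mul_of_nonneg_right hiR hθpos.le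
          _ = Real.pi := by rw [hθ]; field_simp
    have hwn : Real.sin ((n:ℝ) * θ) = 0 := by
      have : (n:ℝ) * θ = Real.pi := by rw [hθ]; field_simp
      rw [this, Real.sin_pi]
    set cst := (ε/8) / Real.sin θ with hcst
    have hcst0 : 0 ≤ cst := by positivity
    have hδwi : ∀ i : ℕ, 1 ≤ i → i < n → ε/8 ≤ cst * Real.sin ((i:ℝ) * θ) := by
      intro i h1 h2
      have := sin_min hn2 h1 h2
      rw [hcst]
      rw [div_mul_eq_mul_div, le_div_iff₀ hsinθ]
      calc ε/8 * Real.sin θ ≤ ε/8 * Real.sin ((i:ℝ) * θ) := by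
            apply mul_le_mul_of_nonneg_left _ (by linarith)
            rw [hθ] at *
            exact this
        _ = ε/8 * Real.sin ((i:ℝ) * θ) := rfl
    -- the invariant
    have inv : ∀ k : ℕ, ∀ i : ℕ, i ≤ n →
        p k i ∈ C ∧ dist (p k i) (q i) ≤ ε/8 ∧
          dist (p k i) (q i) ≤ cst * r^k * Real.sin ((i:ℝ) * θ) := by
      intro k
      induction k with
      | zero =>
        intro i hi
        refine ⟨hp0mem i hi, ?_, ?_⟩
        · exact le_trans (hp0dist i hi) (by linarith)
        · rcases Nat.eq_zero_or_pos i with h0 | h1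
          · subst h0
            have hpe : p 0 0 = q 0 := by
              rw [hp, iterChain_zero, hp0]
              simp only []
              rw [if_neg (by omega : ¬ n ≤ 0), hq0]
              simpa using hγ.start
            rw [hpe]
            simp
          · rcases eq_or_lt_of_le hi with hin | hin
            · subst hin
              have hpe : p 0 i = q i := by
                rw [hp, iterChain_zero, hp0]
                simp only []
                rw [if_pos (le_refl i), hqn]
              rw [hpe]
              simp [hwn]
            · have hb := le_trans (hp0dist i hi) (le_of_lt hyy')
              have := hδwi i h1 hin
              simp only [pow_zero, mul_one]
              calc dist (p 0 i) (q i) = dist (p0 i) (q i) := by rw [hp]; rfl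
                _ ≤ ε/8 := le_trans (hp0dist i hi) (by linarith)
                _ ≤ cst * Real.sin ((i:ℝ) * θ) := this
      | succ k ih =>
        intro i hi
        rcases Nat.eq_zero_or_pos i with h0 | h1
        · subst h0
          have hpe : p (k+1) 0 = q 0 := by
            rw [hp, iterChain_succ]
            rw [if_pos (Or.inl rfl), hp0]
            simp only []
            rw [if_neg (by omega : ¬ n ≤ 0), hq0]
            simpa using hγ.start
          refine ⟨by rw [hpe, hq0]; exact hx, by rw [hpe]; simp; linarith, ?_⟩
          rw [hpe]
          simp
        rcases eq_or_lt_of_le hi with hin | hin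
        · subst hin
          have hpe : p (k+1) i = q i := by
            rw [hp, iterChain_succ]
            rw [if_pos (Or.inr (le_refl i)), hp0]
            simp only []
            rw [if_pos (le_refl i), hqn]
          refine ⟨by rw [hpe, hqn]; exact hy', by rw [hpe]; simp; linarith, ?_⟩
          rw [hpe]
          simp [hwn]
        -- interior
        have hi1 : i - 1 ≤ n := by omega
        have hi2 : i + 1 ≤ n := by omega
        obtain ⟨hC1, hd1, hw1⟩ := ih (i-1) hi1
        obtain ⟨hC2, hd2, hw2⟩ := ih (i+1) hi2
        have hpe : p (k+1) i = midp (p k (i-1)) (p k (i+1)) := by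
          rw [hp, iterChain_succ]
          rw [if_neg (by omega)]
        -- membership: the two neighbours lie in a good ball
        have hzK : ∃ kk ∈ K, dist (p k (i-1)) kk ≤ ε := by
          obtain ⟨kk, hkk, hdk⟩ := hqK (i-1) hi1
          exact ⟨kk, hkk, by
            calc dist (p k (i-1)) kk ≤ dist (p k (i-1)) (q (i-1)) + dist (q (i-1)) kk :=
              dist_triangle _ _ _
              _ ≤ ε/8 + ε/8 := add_le_add hd1 hdk
              _ ≤ ε := by linarith⟩
        have hgood : GoodBall C (p k (i-1)) ε := hGood _ hzK
        have hdzw : dist (p k (i-1)) (p k (i+1)) < ε := by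
          have hqq : dist (q (i-1)) (q (i+1)) = 2 * h' := by
            rw [hqdist (i-1) (i+1) hi1 hi2]
            have hcast : ((i - 1 : ℕ) : ℝ) = (i:ℝ) - 1 := by
              push_cast [h1]; ring
            rw [hcast]
            push_cast
            rw [show ((i:ℝ) - 1 - ((i:ℝ) + 1)) = -2 by ring]
            rw [abs_neg, abs_two]
          calc dist (p k (i-1)) (p k (i+1))
              ≤ dist (p k (i-1)) (q (i-1)) + dist (q (i-1)) (q (i+1))
                + dist (q (i+1)) (p k (i+1)) := dist_triangle4 _ _ _ _
            _ ≤ ε/8 + 2 * h' + ε/8 := by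
                refine add_le_add (add_le_add hd1 (le_of_eq hqq)) ?_
                rw [dist_comm]; exact hd2
            _ ≤ ε/8 + 2 * (ε/4) + ε/8 := by linarith
            _ < ε := by linarith
        have hmemC : midp (p k (i-1)) (p k (i+1)) ∈ C := by
          have hgspec := geod_spec (p k (i-1)) (p k (i+1))
          have himg := hgood (p k (i-1)) ⟨mem_ball_self hεpos, hC1⟩
            (p k (i+1)) ⟨by rw [mem_ball, dist_comm]; exact hdzw, hC2⟩
            (edist_lt_D _ _) _ hgspec
          exact (himg (midp_mem_geodImg hgspec)).2
        -- distance bounds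
        have hmid : midp (q (i-1)) (q (i+1)) = q i := hqmid i h1 hin
        have hcontr : dist (p (k+1) i) (q i)
            ≤ dist (p k (i-1)) (q (i-1)) / 2 + dist (p k (i+1)) (q (i+1)) / 2 := by
          rw [hpe, ← hmid]
          exact midp_contract _ _ _ _
        refine ⟨by rw [hpe]; exact hmemC, by linarith, ?_⟩
        -- trig recursion
        have hcast : ((i - 1 : ℕ) : ℝ) = (i:ℝ) - 1 := by push_cast [h1]; ring
        have htrig : Real.sin (((i-1:ℕ):ℝ) * θ) + Real.sin (((i+1:ℕ):ℝ) * θ)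
            = 2 * r * Real.sin ((i:ℝ) * θ) := by
          rw [hcast]
          push_cast
          rw [show ((i:ℝ) - 1) * θ = (i:ℝ) * θ - θ by ring,
            show ((i:ℝ) + 1) * θ = (i:ℝ) * θ + θ by ring,
            Real.sin_sub, Real.sin_add, hr]
          ring
        calc dist (p (k+1) i) (q i)
            ≤ dist (p k (i-1)) (q (i-1)) / 2 + dist (p k (i+1)) (q (i+1)) / 2 := hcontr
          _ ≤ cst * r^k * Real.sin (((i-1:ℕ):ℝ) * θ) / 2
              + cst * r^k * Real.sin (((i+1:ℕ):ℝ) * θ) / 2 := by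
              apply add_le_add
              · linarith [hw1]
              · linarith [hw2]
          _ = cst * r^k * (Real.sin (((i-1:ℕ):ℝ) * θ) + Real.sin (((i+1:ℕ):ℝ) * θ)) / 2 := by
              ring
          _ = cst * r^(k+1) * Real.sin ((i:ℝ) * θ) := by
              rw [htrig]; ring
    -- conclude : q i ∈ C
    intro i hi
    have happrox : ∀ η > (0:ℝ), ∃ w ∈ C, dist (q i) w < η := by
      intro η hη
      have htend : Filter.Tendsto (fun k : ℕ => cst * r^k * Real.sin ((i:ℝ) * θ))
          Filter.atTop (nhds 0) := by
        have h1 : Filter.Tendsto (fun k : ℕ => r^k) Filter.atTop (nhds 0) :=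
          tendsto_pow_atTop_nhds_zero_of_lt_one hr0 hr1
        have h2 := h1.const_mul (cst * Real.sin ((i:ℝ) * θ))
        simp only [mul_zero] at h2
        convert h2 using 2 with k
        ring
      obtain ⟨k, hk⟩ := (htend.eventually (eventually_lt_nhds hη)).exists
      obtain ⟨hmem, _, hbd⟩ := inv k i hi
      exact ⟨p k i, hmem, by rw [dist_comm]; exact lt_of_le_of_lt hbd hk⟩
    have : q i ∈ closure C := by
      rw [Metric.mem_closure_iff]
      intro η hη
      obtain ⟨w, hw, hdw⟩ := happrox η hη
      exact ⟨w, hw, hdw⟩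
    rw [hclosed.closure_eq] at this
    exact this
  -- now conclude for every parameter t
  intro t ht
  rcases eq_or_lt_of_le hL'0 with hL'z | hL'z
  · have ht0 : t = 0 := le_antisymm (ht.2.trans hL'z.symm.le) ht.1
    rw [ht0]
    have : γ' 0 = x := hγ'.start
    rw [this]
    exact hx
  · -- L' > 0 : approximate t by grid points
    have : γ' t ∈ closure C := by
      rw [Metric.mem_closure_iff]
      intro η hη
      obtain ⟨n₀, hn₀⟩ := exists_nat_gt (max (L'/(ε/4)) (L'/η))
      set n := max n₀ 2 with hn
      have hn2 : 2 ≤ n := le_max_right _ _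
      have hnn₀ : n₀ ≤ n := le_max_left _ _
      have hnR : (n₀:ℝ) ≤ n := by exact_mod_cast hnn₀
      have hnpos : (0:ℝ) < n := by
        have : (2:ℝ) ≤ n := by exact_mod_cast hn2
        linarith
      have hmesh : L' ≤ n * (ε/4) := by
        have h1 : L'/(ε/4) < n := lt_of_le_of_lt (le_max_left _ _) (hn₀.trans_le hnR)
        rw [div_lt_iff₀ (by linarith)] at h1
        linarith
      have hη' : L'/n < η := by
        have h1 : L'/η < n := lt_of_le_of_lt (le_max_right _ _) (hn₀.trans_le hnR)
        rw [div_lt_iff₀ hη] at h1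
        rw [div_lt_iff₀ hnpos]
        linarith [mul_comm η (n:ℝ)]
      set i := ⌊t * n / L'⌋₊ with hi
      have hb0 : 0 ≤ t * n / L' := div_nonneg (mul_nonneg ht.1 hnpos.le) hL'z.le
      have hfl : (i:ℝ) ≤ t * n / L' := Nat.floor_le hb0
      have hfl2 : t * n / L' < i + 1 := Nat.lt_floor_add_one _
      have hin : i ≤ n := by
        have h1 : t * n / L' ≤ n := by
          rw [div_le_iff₀ hL'z]
          have := ht.2
          nlinarith
        have : (i:ℝ) ≤ (n:ℝ) := hfl.trans h1
        exact_mod_cast this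
      have hgrid := grid n hn2 hmesh i hin
      have harg : (i:ℝ) * (L'/n) ∈ Icc (0:ℝ) L' := by
        constructor
        · positivity
        · have hiR : (i:ℝ) ≤ n := by exact_mod_cast hin
          calc (i:ℝ) * (L'/n) ≤ (n:ℝ) * (L'/n) :=
              mul_le_mul_of_nonneg_right hiR (by positivity)
            _ = L' := by field_simp
      have hdist : dist (γ' t) (γ' ((i:ℝ) * (L'/n))) = |t - (i:ℝ) * (L'/n)| :=
        hγ'.dist_eq ht harg
      have hclose : |t - (i:ℝ) * (L'/n)| < η := by
        have e1 : (i:ℝ) * L' ≤ t * n := (le_div_iff₀ hL'z).mp hfl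
        have e2 : t * n < ((i:ℝ) + 1) * L' := (div_lt_iff₀ hL'z).mp hfl2
        have h1 : (i:ℝ) * (L'/n) ≤ t := by
          have := (div_le_iff₀ hnpos).mpr (le_of_eq_of_le (by ring : (i:ℝ) * L' = (i:ℝ) * L') e1)
          calc (i:ℝ) * (L'/n) = (i:ℝ) * L' / n := by ring
            _ ≤ t := this
        have h2 : t - (i:ℝ) * (L'/n) < L'/n := by
          have h3 : t < ((i:ℝ) + 1) * L' / n := (lt_div_iff₀ hnpos).mpr e2
          have h4 : ((i:ℝ) + 1) * L' / n = (i:ℝ) * (L'/n) + L'/n := by ring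
          linarith
        rw [abs_of_nonneg (by linarith)]
        linarith
      exact ⟨γ' ((i:ℝ) * (L'/n)), hgrid, by rw [hdist]; exact hclose⟩
    rw [hclosed.closure_eq] at this
    exact this

end Helpers

/-- A closed, connected, locally convex subset of a complete CAT(0)
space is convex. -/
theorem locally_convex_implies_convex_CAT0
    {X : Type*} [MetricSpace X] [CATSpace 0 X]
    (C : Set X) (hclosed : IsClosed C) (hconn : IsConnected C)
    (hlc : IsLocallyConvexSubset 0 C) :
    IsConvexSubset 0 C := by
  intro x hx y hy _ γ hγ
  have main : ∀ z ∈ C, ∀ t ∈ Icc (0:ℝ) (dist x z), geod x z t ∈ C := by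
    haveI : ConnectedSpace C := Subtype.connectedSpace hconn
    set A : Set C := {z | ∀ t ∈ Icc (0:ℝ) (dist x z.1), geod x z.1 t ∈ C} with hA
    have hopen : IsOpen A := by
      rw [Metric.isOpen_iff]
      rintro ⟨z, hz⟩ hzA
      obtain ⟨δ, hδ, hδprop⟩ := extend hclosed hlc hx hz hzA
      refine ⟨δ, hδ, ?_⟩
      rintro ⟨w, hw⟩ hwball
      have hdzw : dist z w < δ := by
        rw [mem_ball, Subtype.dist_eq] at hwball
        rw [dist_comm]
        exact hwball
      exact hδprop w hw hdzw
    have hclosedA : IsClosed A := by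
      apply IsSeqClosed.isClosed
      intro f zf hf hfz
      have hconv : Filter.Tendsto (fun n => ((f n : X))) Filter.atTop (nhds (zf : X)) :=
        (continuous_subtype_val.tendsto zf).comp hfz
      intro t ht
      set d := dist x (zf : X) with hd
      rcases eq_or_lt_of_le (dist_nonneg : (0:ℝ) ≤ d) with hd0 | hd0
      · have ht0 : t = 0 := le_antisymm (ht.2.trans hd0.symm.le) ht.1
        rw [ht0, (geod_spec x (zf : X)).start]
        exact hx
      · set lam := t / d with hlam
        have hlam0 : 0 ≤ lam := div_nonneg ht.1 (le_of_lt hd0)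
        have hlam1 : lam ≤ 1 := by rw [hlam, div_le_one hd0]; exact ht.2
        have hlamd : lam * d = t := by rw [hlam]; field_simp; exact mul_div_cancel_right₀ t hd0.ne'
        have hcl : geod x (zf : X) t ∈ closure C := by
          rw [Metric.mem_closure_iff]
          intro η hη
          obtain ⟨N, hN⟩ := Metric.tendsto_atTop.mp hconv η hη
          have hdist := hN N (le_refl N)
          set zn := (f N : X) with hzn
          have hcv := geod_convex (geod_spec x (zf : X)) (geod_spec x zn) hlam0 hlam1
          have hmemn : geod x zn (lam * dist x zn) ∈ C := by
            apply hf N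
            constructor
            · exact mul_nonneg hlam0 dist_nonneg
            · calc lam * dist x zn ≤ 1 * dist x zn :=
                  mul_le_mul_of_nonneg_right hlam1 dist_nonneg
                _ = dist x zn := one_mul _
          refine ⟨geod x zn (lam * dist x zn), hmemn, ?_⟩
          have h1 : dist (geod x (zf:X) (lam * d)) (geod x zn (lam * dist x zn))
              ≤ lam * dist (zf:X) zn := hcv
          rw [hlamd] at h1
          calc dist (geod x (zf:X) t) (geod x zn (lam * dist x zn))
              ≤ lam * dist (zf:X) zn := h1
            _ ≤ 1 * dist (zf:X) zn := mul_le_mul_of_nonneg_right hlam1 dist_nonneg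
            _ = dist (zf:X) zn := one_mul _
            _ < η := by rw [dist_comm]; exact hdist
        rw [hclosed.closure_eq] at hcl
        exact hcl
    have hAne : A.Nonempty := by
      refine ⟨⟨x, hx⟩, ?_⟩
      intro t ht
      have : dist x x = 0 := dist_self x
      have ht0 : t = 0 := le_antisymm (by rw [this] at ht; exact ht.2) ht.1
      rw [ht0, (geod_spec x x).start]
      exact hx
    have hAuniv : A = univ := IsClopen.eq_univ ⟨hclosedA, hopen⟩ hAne
    intro z hz
    have : (⟨z, hz⟩ : C) ∈ A := by rw [hAuniv]; exact mem_univ _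
    exact this
  -- transfer to the given geodesic γ
  have heq : EqOn γ (geod x y) (Icc 0 (dist x y)) := geod_unique hγ
  rintro w ⟨s, hs, rfl⟩
  rw [heq hs]
  exact main y hy s hs
end

section
/- In a CAT(κ) space X, let D < D_κ and set δ = D_κ − D. There exists a constant K = K(D) < 1 such that for any geodesic triangle in X with vertices x, y, z of perimeter < 2D_κ satisfying d(x,y), d(x,z) ≤ (2/3)(D + δ/2), the midpoints m(x,y) and m(x,z) satisfy d(m(x,y), m(x,z)) ≤ K · d(y,z). -/
open Metric Set
open scoped ENNReal

/- Auxiliary lemmas -/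
section Aux
open Real

open Real Set

lemma my_arcosh_cosh {x : ℝ} (hx : 0 ≤ x) : _root_.arcosh (Real.cosh x) = x := by
  unfold _root_.arcosh
  rw [show Real.cosh x ^ 2 - 1 = Real.sinh x ^ 2 by rw [Real.cosh_sq]; ring,
    Real.sqrt_sq (by simpa using Real.sinh_nonneg_iff.2 hx), Real.cosh_add_sinh, Real.log_exp]

lemma my_arcosh_le_arcosh {x y : ℝ} (hx : 1 ≤ x) (hxy : x ≤ y) : _root_.arcosh x ≤ _root_.arcosh y := by
  unfold _root_.arcosh
  have h1 : (0:ℝ) < x + Real.sqrt (x ^ 2 - 1) := by positivity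
  apply Real.log_le_log h1
  have : Real.sqrt (x ^ 2 - 1) ≤ Real.sqrt (y ^ 2 - 1) := by
    apply Real.sqrt_le_sqrt; nlinarith
  linarith

lemma my_arcsin_sublinear {l X : ℝ} (hl0 : 0 ≤ l) (hl1 : l ≤ 1) (hX0 : 0 ≤ X) (hX1 : X ≤ 1) :
    Real.arcsin (l * X) ≤ l * Real.arcsin X := by
  have ha0 : 0 ≤ Real.arcsin X := Real.arcsin_nonneg.2 hX0
  have ha2 : Real.arcsin X ≤ π / 2 := Real.arcsin_le_pi_div_two X
  have hmem0 : (0:ℝ) ∈ Icc (0:ℝ) π := ⟨le_refl _, Real.pi_pos.le⟩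
  have hmem1 : Real.arcsin X ∈ Icc (0:ℝ) π := ⟨ha0, by linarith [Real.pi_pos]⟩
  have hconc := strictConcaveOn_sin_Icc.concaveOn.2 hmem0 hmem1 (by linarith : (0:ℝ) ≤ 1 - l)
    hl0 (by ring)
  simp only [smul_eq_mul, mul_zero, Real.sin_zero, zero_add] at hconc
  rw [Real.sin_arcsin (by linarith) hX1] at hconc
  -- hconc : (1-l) * 0 + l * X ≤ sin (l * arcsin X)  (roughly)
  have hsin : l * X ≤ Real.sin (l * Real.arcsin X) := by linarith [hconc]
  calc Real.arcsin (l * X) ≤ Real.arcsin (Real.sin (l * Real.arcsin X)) :=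
        Real.monotone_arcsin hsin
    _ = l * Real.arcsin X := Real.arcsin_sin (by nlinarith [Real.pi_pos]) (by nlinarith)

lemma my_arccos_eq {E : ℝ} (h1 : -1 ≤ E) (h2 : E ≤ 1) :
    Real.arccos E = 2 * Real.arcsin (Real.sqrt ((1 - E) / 2)) := by
  have h3 : Real.cos (Real.arccos E) = E := Real.cos_arccos h1 h2
  have h0 : 0 ≤ Real.arccos E := Real.arccos_nonneg E
  have hπ : Real.arccos E ≤ π := Real.arccos_le_pi E
  have h4 := Real.sin_half_eq_sqrt h0 (by linarith [Real.pi_pos])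
  rw [h3] at h4
  rw [← h4, Real.arcsin_sin (by linarith [Real.pi_pos]) (by linarith)]
  ring

lemma my_cos_range {x y t : ℝ} (hsx : 0 ≤ Real.sin x) (hsy : 0 ≤ Real.sin y)
    (ht : -1 ≤ t) (ht' : t ≤ 1) :
    -1 ≤ Real.cos x * Real.cos y + Real.sin x * Real.sin y * t ∧
      Real.cos x * Real.cos y + Real.sin x * Real.sin y * t ≤ 1 := by
  have px := Real.sin_sq_add_cos_sq x
  have py := Real.sin_sq_add_cos_sq y
  constructor
  · nlinarith [sq_nonneg (Real.cos x + Real.cos y), sq_nonneg (Real.sin x - Real.sin y),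
      mul_nonneg hsx hsy]
  · nlinarith [sq_nonneg (Real.cos x - Real.cos y), sq_nonneg (Real.sin x - Real.sin y),
      mul_nonneg hsx hsy]


lemma my_sph_alg {cu su cv sv cb t : ℝ} (px : su ^ 2 + cu ^ 2 = 1) (pv : sv ^ 2 + cv ^ 2 = 1)
    (hsu : 0 ≤ su) (hsv : 0 ≤ sv) (hcu : cb ≤ cu) (hcv : cb ≤ cv)
    (hcb : 0 < cb) (hcb1 : cb ≤ 1) (ht : -1 ≤ t) (ht' : t ≤ 1) :
    4 * cb ^ 2 * (1 - (cu * cv + su * sv * t)) ≤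
      1 - ((2 * cu ^ 2 - 1) * (2 * cv ^ 2 - 1) + (2 * su * cu) * (2 * sv * cv) * t) := by
  have hg : cb ^ 2 ≤ cu * cv := by nlinarith
  have hm : 0 ≤ su * sv := mul_nonneg hsu hsv
  have hgm1 : cu * cv + su * sv ≤ 1 := by
    nlinarith [sq_nonneg (cu - cv), sq_nonneg (su - sv)]
  have ht1 : 4 * cb ^ 2 * (su * sv) * (1 - t) ≤ 4 * (cu * cv) * (su * sv) * (1 - t) := by
    nlinarith [mul_nonneg (mul_nonneg (by linarith : (0:ℝ) ≤ cu * cv - cb ^ 2) hm)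
      (by linarith : (0:ℝ) ≤ 1 - t)]
  have ht2 : 4 * cb ^ 2 * (1 - (cu * cv + su * sv)) ≤
      2 * (1 - (cu * cv + su * sv)) * (1 + (cu * cv + su * sv)) := by
    nlinarith [mul_nonneg (by linarith : (0:ℝ) ≤ 1 - (cu * cv + su * sv))
      (by nlinarith : (0:ℝ) ≤ 2 * (1 + (cu * cv + su * sv)) - 4 * cb ^ 2)]
  have e1 : 1 - ((2 * cu ^ 2 - 1) * (2 * cv ^ 2 - 1) + (2 * su * cu) * (2 * sv * cv) * t)
      = 2 * (1 - (cu * cv + su * sv)) * (1 + (cu * cv + su * sv)) +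
        4 * (cu * cv) * (su * sv) * (1 - t) := by
    linear_combination (2 * sv ^ 2) * px + (2 - 2 * cu ^ 2) * pv
  rw [e1]
  have e2 : 4 * cb ^ 2 * (1 - (cu * cv + su * sv * t)) =
      4 * cb ^ 2 * (1 - (cu * cv + su * sv)) + 4 * cb ^ 2 * (su * sv) * (1 - t) := by ring
  rw [e2]; linarith

lemma my_sph_core {u v t cb : ℝ} (hu0 : 0 ≤ u) (hv0 : 0 ≤ v)
    (huπ : u ≤ π / 3) (hvπ : v ≤ π / 3)
    (hcu : cb ≤ Real.cos u) (hcv : cb ≤ Real.cos v) (hcb : 1 / 2 < cb)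
    (ht : -1 ≤ t) (ht' : t ≤ 1) :
    Real.arccos (Real.cos u * Real.cos v + Real.sin u * Real.sin v * t) ≤
      (1 / (2 * cb)) *
        Real.arccos (Real.cos (2 * u) * Real.cos (2 * v) +
          Real.sin (2 * u) * Real.sin (2 * v) * t) := by
  have hπ := Real.pi_pos
  have hsu : 0 ≤ Real.sin u := Real.sin_nonneg_of_nonneg_of_le_pi hu0 (by linarith)
  have hsv : 0 ≤ Real.sin v := Real.sin_nonneg_of_nonneg_of_le_pi hv0 (by linarith)
  have hsu2 : 0 ≤ Real.sin (2 * u) :=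
    Real.sin_nonneg_of_nonneg_of_le_pi (by linarith) (by linarith)
  have hsv2 : 0 ≤ Real.sin (2 * v) :=
    Real.sin_nonneg_of_nonneg_of_le_pi (by linarith) (by linarith)
  have hcu1 : Real.cos u ≤ 1 := Real.cos_le_one u
  have hcb0 : (0:ℝ) < cb := by linarith
  have hcb1 : cb ≤ 1 := by linarith
  obtain ⟨hE1, hE2⟩ := my_cos_range hsu hsv ht ht'
  obtain ⟨hF1, hF2⟩ := my_cos_range hsu2 hsv2 ht ht'
  set E := Real.cos u * Real.cos v + Real.sin u * Real.sin v * t with hEdef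
  set F := Real.cos (2 * u) * Real.cos (2 * v) + Real.sin (2 * u) * Real.sin (2 * v) * t
    with hFdef
  rw [my_arccos_eq hE1 hE2, my_arccos_eq hF1 hF2]
  have key : 4 * cb ^ 2 * (1 - E) ≤ 1 - F := by
    have hFex : F = (2 * Real.cos u ^ 2 - 1) * (2 * Real.cos v ^ 2 - 1) +
        (2 * Real.sin u * Real.cos u) * (2 * Real.sin v * Real.cos v) * t := by
      rw [hFdef, Real.cos_two_mul, Real.cos_two_mul, Real.sin_two_mul, Real.sin_two_mul]
    rw [hFex, hEdef]
    exact my_sph_alg (Real.sin_sq_add_cos_sq u) (Real.sin_sq_add_cos_sq v)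
      hsu hsv hcu hcv hcb0 hcb1 ht ht'
  have hF1' : 0 ≤ (1 - F) / 2 := by linarith
  have hsq : Real.sqrt ((1 - E) / 2) ≤ (1 / (2 * cb)) * Real.sqrt ((1 - F) / 2) := by
    have hle : (1 - E) / 2 ≤ (1 / (2 * cb)) ^ 2 * ((1 - F) / 2) := by
      rw [div_pow, one_pow, div_mul_eq_mul_div, le_div_iff₀ (by positivity)]
      nlinarith [key]
    calc Real.sqrt ((1 - E) / 2) ≤ Real.sqrt ((1 / (2 * cb)) ^ 2 * ((1 - F) / 2)) :=
          Real.sqrt_le_sqrt hle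
      _ = (1 / (2 * cb)) * Real.sqrt ((1 - F) / 2) := by
          rw [Real.sqrt_mul (sq_nonneg _), Real.sqrt_sq (by positivity)]
  have hX1 : Real.sqrt ((1 - F) / 2) ≤ 1 := Real.sqrt_le_one.2 (by linarith)
  have hl1 : 1 / (2 * cb) ≤ 1 := by rw [div_le_one (by positivity)]; linarith
  have step1 : Real.arcsin (Real.sqrt ((1 - E) / 2)) ≤
      Real.arcsin ((1 / (2 * cb)) * Real.sqrt ((1 - F) / 2)) := Real.monotone_arcsin hsq
  have step2 := my_arcsin_sublinear (by positivity) hl1 (Real.sqrt_nonneg ((1 - F) / 2)) hX1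
  linarith

lemma my_euclid_bound {a b c : ℝ} (ha : 0 < a) (hb : 0 < b) (hc0 : 0 ≤ c)
    (hc1 : c ≤ a + b) (hc2 : |a - b| ≤ c) :
    modelDistFromAngle 0 (a / 2) (b / 2) (compAngle 0 a b c) ≤ (1 / 2) * c := by
  have hsq : (a - b) ^ 2 ≤ c ^ 2 := by
    have h := abs_le.1 hc2
    nlinarith [h.1, h.2]
  have hw1 : -1 ≤ (a ^ 2 + b ^ 2 - c ^ 2) / (2 * a * b) := by
    rw [le_div_iff₀ (by positivity)]; nlinarith
  have hw2 : (a ^ 2 + b ^ 2 - c ^ 2) / (2 * a * b) ≤ 1 := by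
    rw [div_le_one (by positivity)]; nlinarith
  rw [modelDistFromAngle, compAngle, if_neg (lt_irrefl 0), if_neg (lt_irrefl 0),
    if_pos rfl, if_pos rfl, Real.cos_arccos hw1 hw2]
  have hkey : (a / 2) ^ 2 + (b / 2) ^ 2 -
      2 * (a / 2) * (b / 2) * ((a ^ 2 + b ^ 2 - c ^ 2) / (2 * a * b)) = (c / 2) ^ 2 := by
    field_simp; ring
  rw [hkey, Real.sqrt_sq (by positivity)]
  linarith

lemma my_hyp_bound {κ a b c : ℝ} (hκ : κ < 0) (ha : 0 < a) (hb : 0 < b) (hc0 : 0 ≤ c)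
    (hc1 : c ≤ a + b) (hc2 : |a - b| ≤ c) :
    modelDistFromAngle κ (a / 2) (b / 2) (compAngle κ a b c) ≤ (1 / 2) * c := by
  set w := Real.sqrt (-κ) with hwdef
  have hw : 0 < w := Real.sqrt_pos.2 (by linarith)
  have hnot : ¬ (0 < κ) := by linarith
  have hne : κ ≠ 0 := by linarith
  set θ := compAngle κ a b c with hθdef
  have hden : 0 < Real.sinh (w * a) * Real.sinh (w * b) :=
    mul_pos (Real.sinh_pos_iff.2 (by positivity)) (Real.sinh_pos_iff.2 (by positivity))
  -- range of the angle argument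
  have hup : Real.cosh (w * c) ≤ Real.cosh (w * a) * Real.cosh (w * b) +
      Real.sinh (w * a) * Real.sinh (w * b) := by
    have h1 : Real.cosh (w * c) ≤ Real.cosh (w * (a + b)) := by
      rw [Real.cosh_le_cosh, abs_of_nonneg (by positivity), abs_of_nonneg (by positivity)]
      nlinarith
    calc Real.cosh (w * c) ≤ Real.cosh (w * (a + b)) := h1
      _ = _ := by rw [mul_add, Real.cosh_add]
  have hlo : Real.cosh (w * a) * Real.cosh (w * b) -
      Real.sinh (w * a) * Real.sinh (w * b) ≤ Real.cosh (w * c) := by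
    have h1 : Real.cosh (w * a - w * b) ≤ Real.cosh (w * c) := by
      rw [Real.cosh_le_cosh, abs_of_nonneg (show (0:ℝ) ≤ w * c by positivity)]
      calc |w * a - w * b| = w * |a - b| := by
            rw [← mul_sub, abs_mul, abs_of_nonneg hw.le]
        _ ≤ w * c := by nlinarith
    calc Real.cosh (w * a) * Real.cosh (w * b) - Real.sinh (w * a) * Real.sinh (w * b)
        = Real.cosh (w * a - w * b) := (Real.cosh_sub _ _).symm
      _ ≤ _ := h1
  have hcosθ : Real.cos θ = (Real.cosh (w * a) * Real.cosh (w * b) - Real.cosh (w * c)) /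
      (Real.sinh (w * a) * Real.sinh (w * b)) := by
    rw [hθdef, compAngle, if_neg hnot, if_neg hne, ← hwdef]
    apply Real.cos_arccos
    · rw [le_div_iff₀ hden]; linarith
    · rw [div_le_one hden]; linarith
  have hBeq : Real.cosh (w * a) * Real.cosh (w * b) -
      Real.sinh (w * a) * Real.sinh (w * b) * Real.cos θ = Real.cosh (w * c) := by
    rw [hcosθ]; field_simp; ring
  -- abbreviations for half sides
  set C := Real.cosh (w * (a / 2)) with hC
  set S := Real.sinh (w * (a / 2)) with hS
  set D := Real.cosh (w * (b / 2)) with hD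
  set T := Real.sinh (w * (b / 2)) with hT
  set A := C * D - S * T * Real.cos θ with hA
  have ht1 : Real.cos θ ≤ 1 := Real.cos_le_one θ
  have ht2 : -1 ≤ Real.cos θ := Real.neg_one_le_cos θ
  have hS0 : 0 ≤ S := by rw [hS]; exact Real.sinh_nonneg_iff.2 (by positivity)
  have hT0 : 0 ≤ T := by rw [hT]; exact Real.sinh_nonneg_iff.2 (by positivity)
  have hA1 : 1 ≤ A := by
    have h1 : Real.cosh (w * (a / 2) - w * (b / 2)) ≤ A := by
      rw [Real.cosh_sub, hA, ← hC, ← hS, ← hD, ← hT]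
      nlinarith [mul_nonneg hS0 hT0]
    linarith [Real.one_le_cosh (w * (a / 2) - w * (b / 2)), h1]
  -- key: 2 A^2 - 1 ≤ cosh (w c)
  have hwa : w * a = 2 * (w * (a / 2)) := by ring
  have hwb : w * b = 2 * (w * (b / 2)) := by ring
  have hkey : 2 * A ^ 2 - 1 ≤ Real.cosh (w * c) := by
    rw [← hBeq, hwa, hwb, Real.cosh_two_mul, Real.cosh_two_mul, Real.sinh_two_mul,
      Real.sinh_two_mul, ← hC, ← hS, ← hD, ← hT]
    have pu : C ^ 2 = S ^ 2 + 1 := by rw [hC, hS]; exact Real.cosh_sq _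
    have pv : D ^ 2 = T ^ 2 + 1 := by rw [hD, hT]; exact Real.cosh_sq _
    have hid : (C ^ 2 + S ^ 2) * (D ^ 2 + T ^ 2) -
        2 * S * C * (2 * T * D) * Real.cos θ - (2 * A ^ 2 - 1) =
        2 * S ^ 2 * T ^ 2 * (1 - Real.cos θ ^ 2) := by
      rw [hA]; linear_combination (T ^ 2 - D ^ 2) * pu - pv
    have hnn : 0 ≤ 2 * S ^ 2 * T ^ 2 * (1 - Real.cos θ ^ 2) := by
      have := Real.cos_sq_le_one θ
      have h0 : (0:ℝ) ≤ 2 * S ^ 2 * T ^ 2 := by positivity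
      nlinarith
    linarith [hid, hnn]
  have hAle : A ≤ Real.cosh (w * c / 2) := by
    have h1 : Real.cosh (w * c) = 2 * Real.cosh (w * c / 2) ^ 2 - 1 := by
      have h0 := Real.cosh_two_mul (w * c / 2)
      rw [show 2 * (w * c / 2) = w * c by ring] at h0
      linear_combination h0 - Real.cosh_sq (w * c / 2)
    have h2 := Real.one_le_cosh (w * c / 2)
    have h3 : A ^ 2 ≤ Real.cosh (w * c / 2) ^ 2 := by
      rw [h1] at hkey; linarith
    exact le_of_pow_le_pow_left₀ two_ne_zero (by linarith) h3
  have harc : _root_.arcosh A ≤ w * c / 2 := by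
    calc _root_.arcosh A ≤ _root_.arcosh (Real.cosh (w * c / 2)) := my_arcosh_le_arcosh hA1 hAle
      _ = w * c / 2 := my_arcosh_cosh (by positivity)
  rw [modelDistFromAngle, if_neg hnot, if_neg hne, ← hwdef, ← hC, ← hS, ← hD, ← hT, ← hA]
  calc (1 / w) * _root_.arcosh A ≤ (1 / w) * (w * c / 2) := by
        apply mul_le_mul_of_nonneg_left harc (by positivity)
    _ = (1 / 2) * c := by field_simp

set_option maxHeartbeats 1000000 in
lemma my_sph_bound {κ a b c β : ℝ} (hκ : 0 < κ)
    (ha : 0 < a) (hb : 0 < b) (hc0 : 0 ≤ c)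
    (hc1 : c ≤ a + b) (hc2 : |a - b| ≤ c)
    (hper : Real.sqrt κ * (a + b + c) < 2 * Real.pi)
    (hua : Real.sqrt κ * a / 2 ≤ β) (hvb : Real.sqrt κ * b / 2 ≤ β)
    (hβ : β < Real.pi / 3) :
    modelDistFromAngle κ (a / 2) (b / 2) (compAngle κ a b c) ≤ (1 / (2 * Real.cos β)) * c := by
  have hπ := Real.pi_pos
  set w := Real.sqrt κ with hwdef
  have hw : 0 < w := Real.sqrt_pos.2 hκ
  have hu0 : 0 ≤ w * (a / 2) := by positivity
  have hv0 : 0 ≤ w * (b / 2) := by positivity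
  have hu : w * (a / 2) ≤ β := by
    have : w * (a / 2) = w * a / 2 := by ring
    linarith [hua]
  have hv : w * (b / 2) ≤ β := by
    have : w * (b / 2) = w * b / 2 := by ring
    linarith [hvb]
  have hβ0 : 0 ≤ β := le_trans hu0 hu
  have hβπ : β ≤ Real.pi := by linarith
  have hcb : 1 / 2 < Real.cos β := by
    have h := Real.cos_lt_cos_of_nonneg_of_le_pi hβ0 (by linarith) hβ
    rwa [Real.cos_pi_div_three] at h
  have hcu : Real.cos β ≤ Real.cos (w * (a / 2)) :=
    Real.cos_le_cos_of_nonneg_of_le_pi hu0 hβπ hu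
  have hcv : Real.cos β ≤ Real.cos (w * (b / 2)) :=
    Real.cos_le_cos_of_nonneg_of_le_pi hv0 hβπ hv
  have hwc0 : 0 ≤ w * c := by positivity
  have hwcπ : w * c ≤ Real.pi := by
    have h1 : w * (2 * c) ≤ w * (a + b + c) :=
      mul_le_mul_of_nonneg_left (by linarith) hw.le
    nlinarith
  have hwa_lt : w * a < Real.pi := by nlinarith [hu, hβ]
  have hwb_lt : w * b < Real.pi := by nlinarith [hv, hβ]
  have hsa : 0 < Real.sin (w * a) := Real.sin_pos_of_pos_of_lt_pi (by positivity) hwa_lt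
  have hsb : 0 < Real.sin (w * b) := Real.sin_pos_of_pos_of_lt_pi (by positivity) hwb_lt
  have hden : 0 < Real.sin (w * a) * Real.sin (w * b) := mul_pos hsa hsb
  -- upper bound for angle argument
  have hupper : Real.cos (w * c) - Real.cos (w * a) * Real.cos (w * b) ≤
      Real.sin (w * a) * Real.sin (w * b) := by
    have e := Real.cos_sub (w * a) (w * b)
    have habs : |w * a - w * b| ≤ w * c := by
      have : |w * a - w * b| = w * |a - b| := by
        rw [← mul_sub, abs_mul, abs_of_nonneg hw.le]
      rw [this]
      exact le_trans (mul_le_mul_of_nonneg_left hc2 hw.le) (le_refl _)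
    have h1 : Real.cos (w * c) ≤ Real.cos (w * a - w * b) := by
      rw [← Real.cos_abs (w * a - w * b)]
      exact Real.cos_le_cos_of_nonneg_of_le_pi (abs_nonneg _) hwcπ habs
    linarith
  -- lower bound
  have hlower : -(Real.sin (w * a) * Real.sin (w * b)) ≤
      Real.cos (w * c) - Real.cos (w * a) * Real.cos (w * b) := by
    have e := Real.cos_add (w * a) (w * b)
    by_cases hcase : w * a + w * b ≤ Real.pi
    · have h1 : Real.cos (w * a + w * b) ≤ Real.cos (w * c) := by
        apply Real.cos_le_cos_of_nonneg_of_le_pi hwc0 hcase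
        have := mul_le_mul_of_nonneg_left hc1 hw.le
        nlinarith
      linarith
    · push_neg at hcase
      have h2 : Real.cos (2 * Real.pi - (w * a + w * b)) = Real.cos (w * a + w * b) :=
        Real.cos_two_pi_sub _
      have h3 : w * c ≤ 2 * Real.pi - (w * a + w * b) := by nlinarith [hper]
      have h1 : Real.cos (2 * Real.pi - (w * a + w * b)) ≤ Real.cos (w * c) :=
        Real.cos_le_cos_of_nonneg_of_le_pi hwc0 (by linarith) h3
      linarith
  have hw2a : -1 ≤ (Real.cos (w * c) - Real.cos (w * a) * Real.cos (w * b)) /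
      (Real.sin (w * a) * Real.sin (w * b)) := by
    rw [le_div_iff₀ hden]; linarith
  have hw2b : (Real.cos (w * c) - Real.cos (w * a) * Real.cos (w * b)) /
      (Real.sin (w * a) * Real.sin (w * b)) ≤ 1 := by
    rw [div_le_one hden]; linarith
  set θ := compAngle κ a b c with hθdef
  have hcosθ : Real.cos θ = (Real.cos (w * c) - Real.cos (w * a) * Real.cos (w * b)) /
      (Real.sin (w * a) * Real.sin (w * b)) := by
    rw [hθdef, compAngle, if_pos hκ, ← hwdef]
    exact Real.cos_arccos hw2a hw2b
  have hFeq : Real.cos (w * a) * Real.cos (w * b) +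
      Real.sin (w * a) * Real.sin (w * b) * Real.cos θ = Real.cos (w * c) := by
    rw [hcosθ]; field_simp; ring
  have hcore := my_sph_core hu0 hv0 (by linarith) (by linarith) hcu hcv hcb
    (Real.neg_one_le_cos θ) (Real.cos_le_one θ)
  rw [show 2 * (w * (a / 2)) = w * a by ring, show 2 * (w * (b / 2)) = w * b by ring,
    hFeq, Real.arccos_cos hwc0 hwcπ] at hcore
  rw [modelDistFromAngle, if_pos hκ, ← hwdef]
  have hstep : (1 / w) * Real.arccos (Real.cos (w * (a / 2)) * Real.cos (w * (b / 2)) +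
        Real.sin (w * (a / 2)) * Real.sin (w * (b / 2)) * Real.cos θ)
      ≤ (1 / w) * ((1 / (2 * Real.cos β)) * (w * c)) :=
    mul_le_mul_of_nonneg_left hcore (by positivity)
  have heq : (1 / w) * ((1 / (2 * Real.cos β)) * (w * c)) = (1 / (2 * Real.cos β)) * c := by
    field_simp
  linarith [hstep, heq]

end Aux

/-- Midpoint contraction in a CAT(κ) space. Let `D < D_κ` and
`δ = D_κ − D > 0` (for `κ ≤ 0`, `D` is any finite number and `δ > 0` arbitrary).
There is a constant `K = K(D) < 1` such that for every geodesic triangle `x y z` of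
perimeter `< 2 D_κ` with `d(x,y), d(x,z) ≤ (2/3)(D + δ/2)`, the midpoints of the sides
`xy` and `xz` satisfy `d(m(x,y), m(x,z)) ≤ K · d(y,z)`. -/
theorem catk_midpoint_contraction
    {X : Type*} [MetricSpace X] {κ : ℝ} [CATSpace κ X]
    (D δ : ℝ) (hD : 0 < D) (hδ : 0 < δ)
    (hDκ : 0 < κ → D + δ = Real.pi / Real.sqrt κ) :
    ∃ K : ℝ, K < 1 ∧
      ∀ x y z : X,
        edist x y + edist x z + edist y z < 2 * Dkappa κ →
        dist x y ≤ (2 / 3) * (D + δ / 2) → dist x z ≤ (2 / 3) * (D + δ / 2) →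
        ∀ γ₁ γ₂ : ℝ → X, IsGeodesicSegment γ₁ x y → IsGeodesicSegment γ₂ x z →
          dist (γ₁ (dist x y / 2)) (γ₂ (dist x z / 2)) ≤ K * dist y z := by
  classical
  have hπ := Real.pi_pos
  set K : ℝ := if 0 < κ then 1 / (2 * Real.cos (Real.sqrt κ * (D + δ / 2) / 3)) else 1 / 2
    with hKdef
  have hKfacts : 1 / 2 ≤ K ∧ K < 1 := by
    rw [hKdef]
    split_ifs with hκ
    · have hw : 0 < Real.sqrt κ := Real.sqrt_pos.2 hκ
      have hpi_eq : Real.sqrt κ * (D + δ) = Real.pi := by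
        rw [hDκ hκ]; field_simp
      have hβ0 : 0 ≤ Real.sqrt κ * (D + δ / 2) / 3 := by positivity
      have hβlt : Real.sqrt κ * (D + δ / 2) / 3 < Real.pi / 3 := by
        nlinarith [mul_pos hw hδ]
      have hcb : 1 / 2 < Real.cos (Real.sqrt κ * (D + δ / 2) / 3) := by
        have h := Real.cos_lt_cos_of_nonneg_of_le_pi hβ0 (by linarith) hβlt
        rwa [Real.cos_pi_div_three] at h
      have hcb1 : Real.cos (Real.sqrt κ * (D + δ / 2) / 3) ≤ 1 := Real.cos_le_one _
      constructor
      · rw [div_le_div_iff₀ (by norm_num) (by positivity)]; linarith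
      · rw [div_lt_one (by positivity)]; linarith
    · exact ⟨le_refl _, by norm_num⟩
  obtain ⟨hK2, hK1⟩ := hKfacts
  refine ⟨K, hK1, ?_⟩
  intro x y z hper hxy hxz γ₁ γ₂ h₁ h₂
  have ha0 : 0 ≤ dist x y := dist_nonneg
  have hb0 : 0 ≤ dist x z := dist_nonneg
  have hc0 : 0 ≤ dist y z := dist_nonneg
  by_cases ha : dist x y = 0
  · -- degenerate: y = x
    have hyx : x = y := by rwa [← dist_eq_zero]
    have e1 : γ₁ (dist x y / 2) = x := by
      rw [ha]; simpa using h₁.1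
    have e2 : dist (γ₂ 0) (γ₂ (dist x z / 2)) = |0 - dist x z / 2| :=
      h₂.2.2 0 ⟨le_refl _, hb0⟩ (dist x z / 2) ⟨by linarith, by linarith⟩
    rw [h₂.1] at e2
    have hc : dist y z = dist x z := by rw [← hyx]
    rw [e1, e2, hc]
    rw [abs_of_nonpos (by linarith)]
    nlinarith [hK2, hb0]
  by_cases hb : dist x z = 0
  · -- degenerate: z = x
    have hzx : x = z := by rwa [← dist_eq_zero]
    have e1 : γ₂ (dist x z / 2) = x := by
      rw [hb]; simpa using h₂.1
    have e2 : dist (γ₁ 0) (γ₁ (dist x y / 2)) = |0 - dist x y / 2| :=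
      h₁.2.2 0 ⟨le_refl _, ha0⟩ (dist x y / 2) ⟨by linarith, by linarith⟩
    rw [h₁.1] at e2
    have hc : dist y z = dist x y := by rw [← hzx, dist_comm]
    rw [e1, hc, dist_comm (γ₁ (dist x y / 2)) x, e2]
    rw [abs_of_nonpos (by linarith)]
    nlinarith [hK2, ha0]
  have ha' : 0 < dist x y := lt_of_le_of_ne ha0 (Ne.symm ha)
  have hb' : 0 < dist x z := lt_of_le_of_ne hb0 (Ne.symm hb)
  have hcomp := CATSpace.comparison x y z hper γ₁ γ₂ h₁ h₂
    (dist x y / 2) ⟨by linarith, by linarith⟩ (dist x z / 2) ⟨by linarith, by linarith⟩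
  have htri1 : dist y z ≤ dist x y + dist x z := by
    have h := dist_triangle y x z
    rw [dist_comm y x] at h
    linarith
  have htri2 : |dist x y - dist x z| ≤ dist y z := by
    have h := abs_dist_sub_le y z x
    rwa [dist_comm y x, dist_comm z x] at h
  rcases lt_trichotomy κ 0 with hκ | hκ | hκ
  · -- hyperbolic case
    have hmb := my_hyp_bound hκ ha' hb' hc0 htri1 htri2
    have hKeq : K = 1 / 2 := by rw [hKdef, if_neg (by linarith)]
    rw [hKeq]
    linarith [hcomp, hmb]
  · -- euclidean case
    subst hκ
    have hmb := my_euclid_bound ha' hb' hc0 htri1 htri2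
    have hKeq : K = 1 / 2 := by rw [hKdef, if_neg (lt_irrefl 0)]
    rw [hKeq]
    linarith [hcomp, hmb]
  · -- spherical case
    have hw : 0 < Real.sqrt κ := Real.sqrt_pos.2 hκ
    have hpi_eq : Real.sqrt κ * (D + δ) = Real.pi := by
      rw [hDκ hκ]; field_simp
    have hβlt : Real.sqrt κ * (D + δ / 2) / 3 < Real.pi / 3 := by
      nlinarith [mul_pos hw hδ]
    -- convert the perimeter bound to a real inequality
    have hDk : Dkappa κ = ENNReal.ofReal (Real.pi / Real.sqrt κ) := by
      rw [Dkappa, if_pos hκ]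
    rw [hDk, edist_dist, edist_dist, edist_dist,
      ← ENNReal.ofReal_add dist_nonneg dist_nonneg,
      ← ENNReal.ofReal_add (by positivity) dist_nonneg] at hper
    have h2 : (2 : ℝ≥0∞) * ENNReal.ofReal (Real.pi / Real.sqrt κ) =
        ENNReal.ofReal (2 * (Real.pi / Real.sqrt κ)) := by
      rw [ENNReal.ofReal_mul (by norm_num : (0:ℝ) ≤ 2)]
      norm_num
    rw [h2] at hper
    have hperR : dist x y + dist x z + dist y z < 2 * (Real.pi / Real.sqrt κ) :=
      (ENNReal.ofReal_lt_ofReal_iff_of_nonneg (by positivity)).1 hper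
    have hper' : Real.sqrt κ * (dist x y + dist x z + dist y z) < 2 * Real.pi := by
      have h3 : dist x y + dist x z + dist y z < 2 * Real.pi / Real.sqrt κ := by
        rw [← mul_div_assoc] at hperR
        linarith [hperR]
      have h4 := (lt_div_iff₀ hw).1 h3
      linarith [h4]
    have hua : Real.sqrt κ * dist x y / 2 ≤ Real.sqrt κ * (D + δ / 2) / 3 := by
      nlinarith [hxy, hw.le]
    have hvb : Real.sqrt κ * dist x z / 2 ≤ Real.sqrt κ * (D + δ / 2) / 3 := by
      nlinarith [hxz, hw.le]
    have hmb := my_sph_bound hκ ha' hb' hc0 htri1 htri2 hper' hua hvb hβlt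
    have hKeq : K = 1 / (2 * Real.cos (Real.sqrt κ * (D + δ / 2) / 3)) := by
      rw [hKdef, if_pos hκ]
    rw [hKeq]
    linarith [hcomp, hmb]
end

section
/- Let X be a CAT(κ) space and let x, y ∈ C for a closed, connected, locally convex subset C ⊆ X. Suppose for every z ∈ C with ℓ(x,z) < D_κ the geodesic xz lies in C (where ℓ is the induced length metric). If ℓ(x,y) = D_κ, then d(x,y) = D_κ. -/
open Metric Set
open scoped ENNReal

section Helpers

variable {X : Type*} [MetricSpace X]

lemma geod_continuousOn {g : ℝ → X} {z w : X} (hg : IsGeodesicSegment g z w) :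
    ContinuousOn g (Icc 0 (dist z w)) := by
  have h : LipschitzOnWith 1 g (Icc 0 (dist z w)) := by
    apply LipschitzOnWith.of_dist_le_mul
    intro a ha b hb
    rw [hg.2.2 a ha b hb, NNReal.coe_one, one_mul, Real.dist_eq]
  exact h.continuousOn

lemma evar_geod_le {g : ℝ → X} {z w : X} (hg : IsGeodesicSegment g z w) :
    eVariationOn g (Icc 0 (dist z w)) ≤ edist z w := by
  rw [edist_dist]
  refine iSup_le ?_
  rintro ⟨n, u, hu, us⟩
  calc ∑ i ∈ Finset.range n, edist (g (u (i+1))) (g (u i))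
      = ∑ i ∈ Finset.range n, ENNReal.ofReal (u (i+1) - u i) := by
        refine Finset.sum_congr rfl fun i _ => ?_
        rw [edist_dist, hg.2.2 _ (us _) _ (us _),
          abs_of_nonneg (sub_nonneg.2 (hu (Nat.le_succ i)))]
    _ = ENNReal.ofReal (∑ i ∈ Finset.range n, (u (i+1) - u i)) :=
        (ENNReal.ofReal_sum_of_nonneg (fun i _ => sub_nonneg.2 (hu (Nat.le_succ i)))).symm
    _ = ENNReal.ofReal (u n - u 0) := by rw [Finset.sum_range_sub]
    _ ≤ ENNReal.ofReal (dist z w) := by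
        refine ENNReal.ofReal_le_ofReal ?_
        have h1 := (us n).2; have h2 := (us 0).1; linarith

lemma lengthMetric_le {C : Set X} {x y : X} {c : ℝ → X} (hc : ContinuousOn c (Icc 0 1))
    (h0 : c 0 = x) (h1 : c 1 = y) (hm : MapsTo c (Icc 0 1) C) :
    lengthMetric C x y ≤ eVariationOn c (Icc 0 1) := by
  unfold lengthMetric
  exact iInf_le_of_le c (iInf_le_of_le hc (iInf_le_of_le h0 (iInf_le_of_le h1 (iInf_le _ hm))))

lemma edist_le_lengthMetric {C : Set X} {x y : X} : edist x y ≤ lengthMetric C x y := by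
  unfold lengthMetric
  refine le_iInf fun c => le_iInf fun hc => le_iInf fun h0 => le_iInf fun h1 =>
    le_iInf fun hm => ?_
  rw [← h0, ← h1]
  exact eVariationOn.edist_le c (by constructor <;> norm_num) (by constructor <;> norm_num)

lemma lengthMetric_self {C : Set X} {x : X} (hx : x ∈ C) : lengthMetric C x x = 0 := by
  refine le_antisymm ?_ zero_le
  have h := lengthMetric_le (C := C) (c := fun _ => x) continuousOn_const rfl rfl
    (fun s _ => hx)
  have h2 : eVariationOn (fun _ : ℝ => x) (Icc (0:ℝ) 1) = 0 :=
    eVariationOn.constant_on (by rintro a ⟨_, _, rfl⟩ b ⟨_, _, rfl⟩; rfl)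
  rwa [h2] at h

end Helpers
section Helpers2

variable {X : Type*} [MetricSpace X]

lemma lengthMetric_concat {C : Set X} {x z w : X} {c₁ g : ℝ → X}
    (hc : ContinuousOn c₁ (Icc 0 1)) (h0 : c₁ 0 = x) (h1 : c₁ 1 = z)
    (hm : MapsTo c₁ (Icc 0 1) C)
    (hg : IsGeodesicSegment g z w) (himg : geodImg g z w ⊆ C) :
    lengthMetric C x w ≤ eVariationOn c₁ (Icc 0 1) + edist z w := by
  classical
  set d := dist z w with hd
  have hd0 : (0:ℝ) ≤ d := dist_nonneg
  set φ : ℝ → ℝ := fun s => min (2*s) 1 with hφdef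
  set ψ : ℝ → ℝ := fun s => d * max 0 (2*s - 1) with hψdef
  have hφmono : Monotone φ := fun a b h =>
    min_le_min (by linarith) le_rfl
  have hψmono : Monotone ψ := fun a b h =>
    mul_le_mul_of_nonneg_left (max_le_max le_rfl (by linarith)) hd0
  have hφmaps : ∀ s ∈ Icc (0:ℝ) 1, φ s ∈ Icc (0:ℝ) 1 := by
    rintro s ⟨hs0, hs1⟩
    exact ⟨le_min (by linarith) zero_le_one, min_le_right _ _⟩
  have hψmaps : ∀ s ∈ Icc (0:ℝ) 1, ψ s ∈ Icc (0:ℝ) d := by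
    rintro s ⟨hs0, hs1⟩
    constructor
    · exact mul_nonneg hd0 (le_max_left _ _)
    · calc d * max 0 (2*s-1) ≤ d * 1 := by
            refine mul_le_mul_of_nonneg_left ?_ hd0
            exact max_le zero_le_one (by linarith)
        _ = d := mul_one d
  set c : ℝ → X := fun s => if s ≤ 1/2 then c₁ (φ s) else g (ψ s) with hcdef
  have hF : ContinuousOn (fun s => c₁ (φ s)) (Icc 0 1) := by
    refine hc.comp ?_ hφmaps
    exact ((continuous_const.mul continuous_id).min continuous_const).continuousOn
  have hG : ContinuousOn (fun s => g (ψ s)) (Icc 0 1) := by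
    refine (geod_continuousOn hg).comp ?_ hψmaps
    exact (continuous_const.mul ((continuous_const.max
      ((continuous_const.mul continuous_id).sub continuous_const)))).continuousOn
  have hval : φ (1/2 : ℝ) = 1 := by norm_num [hφdef]
  have hval2 : ψ (1/2 : ℝ) = 0 := by norm_num [hψdef]
  have hcont : ContinuousOn c (Icc 0 1) := by
    refine ContinuousOn.if ?_ (hF.mono inter_subset_left) (hG.mono inter_subset_left)
    rintro a ⟨ha, hfr⟩
    have : frontier {a : ℝ | a ≤ 1/2} = {(1/2 : ℝ)} := by
      have : {a : ℝ | a ≤ 1/2} = Iic (1/2 : ℝ) := rfl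
      rw [this, frontier_Iic]
    rw [this, mem_singleton_iff] at hfr
    subst hfr
    rw [hval, hval2, h1, hg.1]
  have hc0 : c 0 = x := by
    have : ((0:ℝ) ≤ 1/2) := by norm_num
    simp only [hcdef, if_pos this]
    have : φ (0:ℝ) = 0 := by norm_num [hφdef]
    rw [this, h0]
  have hc1 : c 1 = w := by
    have hn : ¬ ((1:ℝ) ≤ 1/2) := by norm_num
    simp only [hcdef, if_neg hn]
    have : ψ (1:ℝ) = d := by norm_num [hψdef]
    rw [this, hg.2.1]
  have hmc : MapsTo c (Icc 0 1) C := by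
    intro s hs
    by_cases h : s ≤ 1/2
    · simp only [hcdef, if_pos h]
      exact hm (hφmaps s hs)
    · simp only [hcdef, if_neg h]
      exact himg ⟨ψ s, hψmaps s hs, rfl⟩
  have hsplit : eVariationOn c (Icc 0 (1/2)) + eVariationOn c (Icc (1/2) 1)
      = eVariationOn c (Icc 0 1) := by
    have h := eVariationOn.Icc_add_Icc c (s := univ)
      (by norm_num : (0:ℝ) ≤ 1/2) (by norm_num : (1:ℝ)/2 ≤ 1) (mem_univ _)
    simpa using h
  have e1 : eVariationOn c (Icc 0 (1/2)) ≤ eVariationOn c₁ (Icc 0 1) := by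
    have heq : EqOn c ((fun u => c₁ u) ∘ φ) (Icc 0 (1/2)) := by
      rintro s ⟨_, hs⟩
      simp only [hcdef, Function.comp_apply, if_pos hs]
    rw [eVariationOn.eq_of_eqOn heq,
      eVariationOn.comp_eq_of_monotoneOn c₁ φ (hφmono.monotoneOn _)]
    refine eVariationOn.mono c₁ ?_
    rintro _ ⟨s, ⟨hs0, hs1⟩, rfl⟩
    exact hφmaps s ⟨hs0, by linarith⟩
  have e2 : eVariationOn c (Icc (1/2) 1) ≤ edist z w := by
    have heq : EqOn c ((fun u => g u) ∘ ψ) (Icc (1/2) 1) := by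
      rintro s ⟨hs0, hs1⟩
      by_cases h : s ≤ 1/2
      · have hs : s = 1/2 := le_antisymm h hs0
        subst hs
        simp only [hcdef, Function.comp_apply, if_pos le_rfl, hval, hval2, h1, hg.1]
      · simp only [hcdef, Function.comp_apply, if_neg h]
    rw [eVariationOn.eq_of_eqOn heq,
      eVariationOn.comp_eq_of_monotoneOn g ψ (hψmono.monotoneOn _)]
    refine le_trans (eVariationOn.mono g ?_) (evar_geod_le hg)
    rintro _ ⟨s, ⟨hs0, hs1⟩, rfl⟩
    exact hψmaps s ⟨by linarith, hs1⟩
  calc lengthMetric C x w ≤ eVariationOn c (Icc 0 1) := lengthMetric_le hcont hc0 hc1 hmc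
    _ = eVariationOn c (Icc 0 (1/2)) + eVariationOn c (Icc (1/2) 1) := hsplit.symm
    _ ≤ eVariationOn c₁ (Icc 0 1) + edist z w := add_le_add e1 e2

lemma lengthMetric_triangle_geod {C : Set X} {x z w : X} {g : ℝ → X}
    (hg : IsGeodesicSegment g z w) (himg : geodImg g z w ⊆ C) :
    lengthMetric C x w ≤ lengthMetric C x z + edist z w := by
  have key : ∀ v : ℝ≥0∞, lengthMetric C x z < v →
      lengthMetric C x w ≤ v + edist z w := by
    intro v hv
    rw [lengthMetric] at hv
    simp only [iInf_lt_iff] at hv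
    obtain ⟨c₁, hc, h0, h1, hm, hvar⟩ := hv
    exact (lengthMetric_concat hc h0 h1 hm hg himg).trans
      (add_le_add hvar.le le_rfl)
  refine ENNReal.le_of_forall_pos_le_add fun ε hε hlt => ?_
  have hfin : lengthMetric C x z ≠ ⊤ := by
    intro h
    rw [h] at hlt
    simp at hlt
  have hstep := key (lengthMetric C x z + ε)
    (ENNReal.lt_add_right hfin (by exact_mod_cast hε.ne'))
  calc lengthMetric C x w ≤ lengthMetric C x z + ε + edist z w := hstep
    _ = lengthMetric C x z + edist z w + ε := by ring

end Helpers2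
section Helpers3

variable {X : Type*} [MetricSpace X]

lemma exists_geod_in {κ : ℝ} (hκ : 0 < κ) [CATSpace κ X] {C : Set X}
    (hlc : IsLocallyConvexSubset κ C) {p : X} (hp : p ∈ C) :
    ∃ δ > (0:ℝ), ∀ z ∈ C, ∀ w ∈ C, dist p z < δ → dist p w < δ →
      ∃ g, IsGeodesicSegment g z w ∧ geodImg g z w ⊆ C := by
  obtain ⟨ε, hε, hconv⟩ := hlc p hp
  have hP : 0 < Real.pi / Real.sqrt κ :=
    div_pos Real.pi_pos (Real.sqrt_pos.2 hκ)
  refine ⟨min ε (Real.pi / Real.sqrt κ) / 2, by positivity, ?_⟩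
  intro z hz w hw hpz hpw
  have hzball : z ∈ ball p ε ∩ C := by
    refine ⟨?_, hz⟩
    rw [mem_ball, dist_comm]
    calc dist p z < min ε (Real.pi / Real.sqrt κ) / 2 := hpz
      _ ≤ ε := by
        have := min_le_left ε (Real.pi / Real.sqrt κ); linarith
  have hwball : w ∈ ball p ε ∩ C := by
    refine ⟨?_, hw⟩
    rw [mem_ball, dist_comm]
    calc dist p w < min ε (Real.pi / Real.sqrt κ) / 2 := hpw
      _ ≤ ε := by
        have := min_le_left ε (Real.pi / Real.sqrt κ); linarith
  have hzw : edist z w < Dkappa κ := by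
    have hd : dist z w < Real.pi / Real.sqrt κ := by
      have h := dist_triangle z p w
      rw [dist_comm z p] at h
      have := min_le_right ε (Real.pi / Real.sqrt κ)
      linarith
    rw [edist_dist, Dkappa, if_pos hκ]
    exact (ENNReal.ofReal_lt_ofReal_iff hP).2 hd
  obtain ⟨g, hg⟩ := CATSpace.exists_geodesic z w hzw
  refine ⟨g, hg, ?_⟩
  exact (hconv z hzball w hwball hzw g hg).trans inter_subset_right

end Helpers3


/-- If every `z ∈ C` with `ℓ(x,z) < D_κ` is joined to `x` by a geodesic
inside `C`, and `ℓ(x,y) = D_κ`, then `d(x,y) = D_κ`. -/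
theorem length_eq_Dkappa_implies_dist_eq
    {X : Type*} [MetricSpace X] {κ : ℝ} (hκ : 0 < κ) [CATSpace κ X]
    (C : Set X) (hclosed : IsClosed C) (hconn : IsConnected C)
    (hlc : IsLocallyConvexSubset κ C)
    {x y : X} (hx : x ∈ C) (hy : y ∈ C)
    (hgeo : ∀ z ∈ C, lengthMetric C x z < Dkappa κ →
      ∀ γ : ℝ → X, IsGeodesicSegment γ x z → geodImg γ x z ⊆ C)
    (hxy : lengthMetric C x y = Dkappa κ) :
    dist x y = Real.pi / Real.sqrt κ := by
  have hP : 0 < Real.pi / Real.sqrt κ := div_pos Real.pi_pos (Real.sqrt_pos.2 hκ)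
  have hD : Dkappa κ = ENNReal.ofReal (Real.pi / Real.sqrt κ) := if_pos hκ
  have hDne : Dkappa κ ≠ ⊤ := by rw [hD]; exact ENNReal.ofReal_ne_top
  have hDpos : 0 < Dkappa κ := by rw [hD]; exact ENNReal.ofReal_pos.2 hP
  have hub : edist x y ≤ Dkappa κ := hxy ▸ edist_le_lengthMetric
  have hlb : ∀ ε : ℝ, 0 < ε → Dkappa κ ≤ edist x y + ENNReal.ofReal (3 * ε) := by
    intro ε hε
    have hcurve : lengthMetric C x y < Dkappa κ + ENNReal.ofReal ε := by
      rw [hxy]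
      exact ENNReal.lt_add_right hDne (ENNReal.ofReal_pos.2 hε).ne'
    rw [lengthMetric] at hcurve
    simp only [iInf_lt_iff] at hcurve
    obtain ⟨γ, hγc, hγ0, hγ1, hγm, hvar⟩ := hcurve
    set S := {t : ℝ | t ∈ Icc (0:ℝ) 1 ∧ Dkappa κ ≤ lengthMetric C x (γ t)} with hSdef
    have h1S : (1:ℝ) ∈ S := ⟨⟨zero_le_one, le_rfl⟩, by rw [hγ1, hxy]⟩
    have hSne : S.Nonempty := ⟨1, h1S⟩
    have hSbdd : BddBelow S := ⟨0, fun t ht => ht.1.1⟩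
    set t₀ := sInf S with ht₀def
    have ht₀0 : 0 ≤ t₀ := le_csInf hSne fun t ht => ht.1.1
    have ht₀1 : t₀ ≤ 1 := csInf_le hSbdd h1S
    have ht₀Icc : t₀ ∈ Icc (0:ℝ) 1 := ⟨ht₀0, ht₀1⟩
    have ht₀C : γ t₀ ∈ C := hγm ht₀Icc
    have hbelow : ∀ t ∈ Icc (0:ℝ) 1, t < t₀ → lengthMetric C x (γ t) < Dkappa κ := by
      intro t ht htlt
      by_contra hcon
      push_neg at hcon
      exact absurd (csInf_le hSbdd ⟨ht, hcon⟩) (not_le.2 htlt)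
    have ht₀bad : Dkappa κ ≤ lengthMetric C x (γ t₀) := by
      by_contra hcon
      push_neg at hcon
      obtain ⟨δg, hδg, hgeod⟩ := exists_geod_in hκ hlc ht₀C
      have hℓtop : lengthMetric C x (γ t₀) ≠ ⊤ :=
        ne_top_of_lt hcon
      set r := Dkappa κ - lengthMetric C x (γ t₀) with hrdef
      have hrpos : 0 < r := tsub_pos_of_lt hcon
      have hrtop : r ≠ ⊤ := ne_top_of_le_ne_top hDne tsub_le_self
      set ρ := r.toReal with hρdef
      have hρpos : 0 < ρ := ENNReal.toReal_pos hrpos.ne' hrtop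
      have hcw := hγc t₀ ht₀Icc
      rw [Metric.continuousWithinAt_iff] at hcw
      obtain ⟨δc, hδc, hc⟩ := hcw (min δg ρ) (lt_min hδg hρpos)
      have hnear : ∀ s ∈ Icc (0:ℝ) 1, dist s t₀ < δc →
          lengthMetric C x (γ s) < Dkappa κ := by
        intro s hs hds
        have hdist := hc hs hds
        have hd1 : dist (γ t₀) (γ t₀) < δg := by simpa [dist_self] using hδg
        have hd2 : dist (γ t₀) (γ s) < δg := by
          rw [dist_comm]; exact hdist.trans_le (min_le_left _ _)
        obtain ⟨g, hg, hgC⟩ := hgeod (γ t₀) ht₀C (γ s) (hγm hs) hd1 hd2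
        have hedist : edist (γ t₀) (γ s) < r := by
          rw [edist_dist, ← ENNReal.ofReal_toReal hrtop]
          refine (ENNReal.ofReal_lt_ofReal_iff hρpos).2 ?_
          rw [dist_comm]; exact hdist.trans_le (min_le_right _ _)
        calc lengthMetric C x (γ s)
            ≤ lengthMetric C x (γ t₀) + edist (γ t₀) (γ s) :=
              lengthMetric_triangle_geod hg hgC
          _ < lengthMetric C x (γ t₀) + r := ENNReal.add_lt_add_left hℓtop hedist
          _ = Dkappa κ := add_tsub_cancel_of_le hcon.le
      have hlow : ∀ u ∈ S, t₀ + δc ≤ u := by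
        intro u huS
        have hu0 : t₀ ≤ u := csInf_le hSbdd huS
        by_contra hcon2
        push_neg at hcon2
        have hud : dist u t₀ < δc := by
          rw [Real.dist_eq, abs_of_nonneg (by linarith)]; linarith
        exact absurd huS.2 (not_le.2 (hnear u huS.1 hud))
      have hfin := le_csInf hSne hlow
      linarith
    have ht₀pos : 0 < t₀ := by
      rcases eq_or_lt_of_le ht₀0 with h | h
      · exfalso
        have h0 : lengthMetric C x (γ t₀) = 0 := by
          rw [← h, hγ0, lengthMetric_self hx]
        rw [h0] at ht₀bad
        exact hDpos.ne' (le_antisymm ht₀bad zero_le)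
      · exact h
    obtain ⟨δg, hδg, hgeod⟩ := exists_geod_in hκ hlc ht₀C
    have hcw := hγc t₀ ht₀Icc
    rw [Metric.continuousWithinAt_iff] at hcw
    obtain ⟨δc, hδc, hc⟩ := hcw (min δg ε) (lt_min hδg hε)
    set t := max 0 (t₀ - δc/2) with htdef
    have ht0 : (0:ℝ) ≤ t := le_max_left _ _
    have htlt : t < t₀ := max_lt ht₀pos (by linarith)
    have htIcc : t ∈ Icc (0:ℝ) 1 := ⟨ht0, le_trans htlt.le ht₀1⟩
    have htd : dist t t₀ < δc := by
      rw [Real.dist_eq, abs_of_nonpos (by linarith)]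
      have h2 : t₀ - δc/2 ≤ t := le_max_right _ _
      linarith
    have hdist := hc htIcc htd
    have hℓt : lengthMetric C x (γ t) < Dkappa κ := hbelow t htIcc htlt
    have htC : γ t ∈ C := hγm htIcc
    have hd1 : dist (γ t₀) (γ t) < δg := by
      rw [dist_comm]; exact hdist.trans_le (min_le_left _ _)
    have hd2 : dist (γ t₀) (γ t₀) < δg := by simpa [dist_self] using hδg
    obtain ⟨g₁, hg₁, hg₁C⟩ := hgeod (γ t) htC (γ t₀) ht₀C hd1 hd2
    have hDle : Dkappa κ ≤ lengthMetric C x (γ t) + ENNReal.ofReal ε := by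
      calc Dkappa κ ≤ lengthMetric C x (γ t₀) := ht₀bad
        _ ≤ lengthMetric C x (γ t) + edist (γ t) (γ t₀) :=
            lengthMetric_triangle_geod hg₁ hg₁C
        _ ≤ lengthMetric C x (γ t) + ENNReal.ofReal ε := by
            refine add_le_add_right ?_ _
            rw [edist_dist]
            exact ENNReal.ofReal_le_ofReal (hdist.trans_le (min_le_right _ _)).le
    have hedlt : edist x (γ t) < Dkappa κ := lt_of_le_of_lt edist_le_lengthMetric hℓt
    obtain ⟨g₂, hg₂⟩ := CATSpace.exists_geodesic x (γ t) hedlt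
    have hg₂C := hgeo (γ t) htC hℓt g₂ hg₂
    have hge : lengthMetric C x (γ t) ≤ edist x (γ t) := by
      have h := lengthMetric_triangle_geod (x := x) hg₂ hg₂C
      rwa [lengthMetric_self hx, zero_add] at h
    have hEq : edist x (γ t) = lengthMetric C x (γ t) :=
      le_antisymm edist_le_lengthMetric hge
    have hsplit : eVariationOn γ (Icc 0 t) + eVariationOn γ (Icc t 1)
        = eVariationOn γ (Icc 0 1) := by
      have h := eVariationOn.Icc_add_Icc γ (s := univ) ht0 htIcc.2 (mem_univ t)
      simpa using h
    have hA : edist x (γ t) ≤ eVariationOn γ (Icc 0 t) := by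
      rw [← hγ0]
      exact eVariationOn.edist_le γ (left_mem_Icc.2 ht0) (right_mem_Icc.2 ht0)
    have hB : edist (γ t) y ≤ eVariationOn γ (Icc t 1) := by
      rw [← hγ1]
      exact eVariationOn.edist_le γ (left_mem_Icc.2 htIcc.2) (right_mem_Icc.2 htIcc.2)
    have hBsmall : edist (γ t) y ≤ ENNReal.ofReal (2 * ε) := by
      have hchain : edist (γ t) y + Dkappa κ < ENNReal.ofReal (2*ε) + Dkappa κ := by
        calc edist (γ t) y + Dkappa κ
            ≤ edist (γ t) y + (lengthMetric C x (γ t) + ENNReal.ofReal ε) :=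
              add_le_add_right hDle _
          _ = edist (γ t) y + edist x (γ t) + ENNReal.ofReal ε := by
              rw [← hEq]; ring
          _ ≤ eVariationOn γ (Icc t 1) + eVariationOn γ (Icc 0 t) + ENNReal.ofReal ε :=
              add_le_add (add_le_add hB hA) le_rfl
          _ = eVariationOn γ (Icc 0 1) + ENNReal.ofReal ε := by
              rw [add_comm (eVariationOn γ (Icc t 1)), hsplit]
          _ < (Dkappa κ + ENNReal.ofReal ε) + ENNReal.ofReal ε :=
              (ENNReal.add_lt_add_iff_right ENNReal.ofReal_ne_top).2 hvar
          _ = ENNReal.ofReal (2*ε) + Dkappa κ := by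
              rw [two_mul, ENNReal.ofReal_add hε.le hε.le]; ring
      exact ((ENNReal.add_lt_add_iff_right hDne).1 hchain).le
    calc Dkappa κ ≤ lengthMetric C x (γ t) + ENNReal.ofReal ε := hDle
      _ = edist x (γ t) + ENNReal.ofReal ε := by rw [hEq]
      _ ≤ (edist x y + edist y (γ t)) + ENNReal.ofReal ε :=
          add_le_add (edist_triangle _ _ _) le_rfl
      _ = edist x y + edist (γ t) y + ENNReal.ofReal ε := by rw [edist_comm y]
      _ ≤ edist x y + ENNReal.ofReal (2*ε) + ENNReal.ofReal ε :=
          add_le_add (add_le_add le_rfl hBsmall) le_rfl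
      _ = edist x y + ENNReal.ofReal (3*ε) := by
          rw [add_assoc, ← ENNReal.ofReal_add (by linarith : (0:ℝ) ≤ 2*ε) hε.le,
            show 2*ε + ε = 3*ε by ring]
  have hle : Dkappa κ ≤ edist x y := by
    refine ENNReal.le_of_forall_pos_le_add fun η hη hlt => ?_
    have hpos : (0:ℝ) < (η:ℝ)/3 := by
      have : (0:ℝ) < (η:ℝ) := by exact_mod_cast hη
      linarith
    have h := hlb ((η:ℝ)/3) hpos
    have heq : ENNReal.ofReal (3 * ((η:ℝ)/3)) = (η : ℝ≥0∞) := by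
      rw [show (3:ℝ) * ((η:ℝ)/3) = (η:ℝ) by ring, ENNReal.ofReal_coe_nnreal]
    rwa [heq] at h
  have hedist : edist x y = Dkappa κ := le_antisymm hub hle
  rw [edist_dist, hD] at hedist
  exact (ENNReal.ofReal_eq_ofReal_iff dist_nonneg hP.le).1 hedist
end

section
/- Let C < 2π/3. There exists a constant K = K(C) < 1, depending only on C, such that for every 0 < a ≤ C, setting α = cos(a/2), whenever c, c' ∈ [0, π) satisfy sin²(c'/2) = (1/(4α²))·sin²(c/2), we have c' ≤ K·c. -/
open Real

/-- Concavity consequence: `l * sin x ≤ sin (l * x)` for `x ∈ [0, π]`, `l ∈ [0,1]`. -/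
lemma sin_mul_ge (l x : ℝ) (hl0 : 0 ≤ l) (hl1 : l ≤ 1) (hx0 : 0 ≤ x) (hx : x ≤ Real.pi) :
    l * Real.sin x ≤ Real.sin (l * x) := by
  have h := strictConcaveOn_sin_Icc.concaveOn.2 (x := x) (y := 0)
    (by exact ⟨hx0, hx⟩) (by constructor <;> [exact le_refl 0; positivity]) hl0
    (by linarith : (0:ℝ) ≤ 1 - l) (by ring)
  simp only [smul_eq_mul, Real.sin_zero, mul_zero, add_zero] at h
  exact h

/-- Elementary estimate: if `0 < a ≤ C < 2π/3`, `α = cos(a/2)`, and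
`c, c' ∈ [0,π)` satisfy `sin²(c'/2) = (1/(4α²))·sin²(c/2)`, then there is a constant
`K = K(C) < 1`, depending only on the upper bound `C`, with `c' ≤ K·c`. -/
theorem arcsin_contraction_linear_bound
    (C : ℝ) (hC0 : 0 < C) (hC : C < 2 * Real.pi / 3) :
    ∃ K : ℝ, K < 1 ∧
      ∀ a c c' : ℝ, 0 < a → a ≤ C →
        c ∈ Set.Ico 0 Real.pi → c' ∈ Set.Ico 0 Real.pi →
        Real.sin (c' / 2) ^ 2 =
          (1 / (4 * Real.cos (a / 2) ^ 2)) * Real.sin (c / 2) ^ 2 →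
        c' ≤ K * c := by
  have hpi := Real.pi_pos
  have hCcos : 1 / 2 < Real.cos (C / 2) := by
    have : Real.cos (Real.pi / 3) < Real.cos (C / 2) := by
      apply Real.cos_lt_cos_of_nonneg_of_le_pi (by positivity) (by linarith)
      linarith
    rwa [Real.cos_pi_div_three] at this
  refine ⟨1 / (2 * Real.cos (C / 2)), ?_, ?_⟩
  · rw [div_lt_one (by linarith)]; linarith
  intro a c c' ha0 haC hc hc' heq
  obtain ⟨hc0, hcpi⟩ := hc
  obtain ⟨hc'0, hc'pi⟩ := hc'
  set α := Real.cos (a / 2) with hα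
  have hαge : Real.cos (C / 2) ≤ α := by
    apply Real.cos_le_cos_of_nonneg_of_le_pi (by positivity) (by linarith) (by linarith)
  have hα0 : 0 < α := by linarith
  set l := 1 / (2 * α) with hl
  have hl0 : 0 < l := by positivity
  have hl1 : l < 1 := by rw [hl, div_lt_one (by linarith)]; linarith
  -- sin(c'/2) = l * sin(c/2)
  have hs : Real.sin (c' / 2) = l * Real.sin (c / 2) := by
    have hl2 : l ^ 2 = 1 / (4 * α ^ 2) := by
      rw [hl]; field_simp; ring
    have h1 : Real.sin (c' / 2) ^ 2 = (l * Real.sin (c / 2)) ^ 2 := by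
      rw [heq, mul_pow, hl2]
    have h2 : 0 ≤ Real.sin (c' / 2) :=
      Real.sin_nonneg_of_nonneg_of_le_pi (by linarith) (by linarith)
    have h3 : 0 ≤ l * Real.sin (c / 2) := by
      have := Real.sin_nonneg_of_nonneg_of_le_pi (x := c / 2) (by linarith) (by linarith)
      positivity
    nlinarith [sq_nonneg (Real.sin (c' / 2) - l * Real.sin (c / 2))]
  -- sin(c'/2) ≤ sin(l * (c/2))
  have hineq : Real.sin (c' / 2) ≤ Real.sin (l * (c / 2)) := by
    rw [hs]
    exact sin_mul_ge l (c / 2) hl0.le hl1.le (by linarith) (by linarith)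
  -- conclude c'/2 ≤ l * (c/2) via injectivity/monotonicity of sin on [0, π/2]
  have hlc : l * (c / 2) ≤ Real.pi / 2 := by
    have : l * (c / 2) ≤ 1 * (c / 2) := by
      apply mul_le_mul_of_nonneg_right hl1.le (by linarith)
    linarith
  have hkey : c' / 2 ≤ l * (c / 2) := by
    by_contra hcon
    push_neg at hcon
    have : Real.sin (l * (c / 2)) < Real.sin (c' / 2) := by
      apply Real.sin_lt_sin_of_lt_of_le_pi_div_two (by nlinarith : -(Real.pi / 2) ≤ l * (c / 2)) (by linarith : c' / 2 ≤ Real.pi / 2) hcon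
    linarith
  have hlK : l ≤ 1 / (2 * Real.cos (C / 2)) := by
    rw [hl]
    apply div_le_div_of_nonneg_left (by norm_num) (by linarith) (by linarith)
  nlinarith
end
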